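/- arXiv:0805.3806 — 7 statements merged into one kernel-verified Lean document; each statement's English description precedes it below -/
import Mathlib

section
/- Let k be a commutative ring, let R and A be associative unital k-algebras, and let η : R → A be a k-algebra homomorphism. There is a bijective correspondence between: (a) right A-module structures ⋅ on the k-module R which extend the right regular R-module structure, in the sense that r ⋅ η(r') = r r' for all r, r' ∈ R; and (b) k-linear maps χ : A → R (called right characters) satisfying (i) χ(a η(r)) = χ(a) r for all a ∈ A, r ∈ R, (ii) χ(a a') = χ(η(χ(a)) a') for all a, a' ∈ A, and (iii) χ(1_A) = 1_R. The correspondence sends a right A-module structure to χ(a) := 1_R ⋅ a, and a right character χ to the action r ⋅ a := χ(η(r) a). -/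
/-!
An extending action is determined by the action on `1`, since
`r ⋅ a = (1 ⋅ η r) ⋅ a = 1 ⋅ (η r * a)`; conversely a right character `χ` satisfies
`χ (η r) = r`, which makes `r ⋅ a := χ (η r * a)` unital and extending.
-/

/-- A right `A`-module structure on the `k`-module `R` which extends the right
regular `R`-module structure via `η : R → A`. -/
structure RightModuleExtendingRegular (k R A : Type*) [CommRing k] [Ring R]
    [Algebra k R] [Ring A] [Algebra k A] (η : R →ₐ[k] A) where
  act : R → A → R
  act_add_left : ∀ (r r' : R) (a : A), act (r + r') a = act r a + act r' a
  act_add_right : ∀ (r : R) (a a' : A), act r (a + a') = act r a + act r a'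
  act_smul_left : ∀ (c : k) (r : R) (a : A), act (c • r) a = c • act r a
  act_smul_right : ∀ (c : k) (r : R) (a : A), act r (c • a) = c • act r a
  act_one : ∀ r : R, act r 1 = r
  act_mul : ∀ (r : R) (a a' : A), act r (a * a') = act (act r a) a'
  extends_regular : ∀ r r' : R, act r (η r') = r * r'

/-- A right character on the `R`-ring `(A, η)`: a `k`-linear map `χ : A → R`
satisfying right `R`-linearity, associativity and unitality. -/
structure RightCharacter (k R A : Type*) [CommRing k] [Ring R]
    [Algebra k R] [Ring A] [Algebra k A] (η : R →ₐ[k] A) where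
  χ : A →ₗ[k] R
  map_mul_eta : ∀ (a : A) (r : R), χ (a * η r) = χ a * r
  char_assoc : ∀ a a' : A, χ (a * a') = χ (η (χ a) * a')
  char_one : χ 1 = 1

section

variable {k R A : Type*} [CommRing k] [Ring R] [Algebra k R] [Ring A] [Algebra k A]
  {η : R →ₐ[k] A}

namespace RightModuleExtendingRegular

theorem ext {d d' : RightModuleExtendingRegular k R A η} (h : d.act = d'.act) : d = d' := by
  cases d; cases d'; congr

theorem act_eq_act_one_eta_mul (d : RightModuleExtendingRegular k R A η) (r : R) (a : A) :
    d.act r a = d.act 1 (η r * a) := by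
  rw [d.act_mul, d.extends_regular, one_mul]

def toRightCharacter (d : RightModuleExtendingRegular k R A η) : RightCharacter k R A η where
  χ :=
    { toFun := d.act 1
      map_add' := d.act_add_right 1
      map_smul' := fun c a => d.act_smul_right c 1 a }
  map_mul_eta a r := by
    simp only [LinearMap.coe_mk, AddHom.coe_mk, d.act_mul, d.extends_regular]
  char_assoc a a' := by
    simp only [LinearMap.coe_mk, AddHom.coe_mk, ← d.act_eq_act_one_eta_mul, d.act_mul]
  char_one := d.act_one 1

@[simp]
theorem toRightCharacter_χ_apply (d : RightModuleExtendingRegular k R A η) (a : A) :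
    d.toRightCharacter.χ a = d.act 1 a :=
  rfl

end RightModuleExtendingRegular

namespace RightCharacter

theorem ext {c c' : RightCharacter k R A η} (h : c.χ = c'.χ) : c = c' := by
  cases c; cases c'; congr

@[simp]
theorem χ_eta (c : RightCharacter k R A η) (r : R) : c.χ (η r) = r := by
  simpa [c.char_one] using c.map_mul_eta 1 r

def toRightModuleExtendingRegular (c : RightCharacter k R A η) :
    RightModuleExtendingRegular k R A η where
  act r a := c.χ (η r * a)
  act_add_left r r' a := by rw [map_add, add_mul, map_add]
  act_add_right r a a' := by rw [mul_add, map_add]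
  act_smul_left x r a := by rw [map_smul, smul_mul_assoc, map_smul]
  act_smul_right x r a := by rw [mul_smul_comm, map_smul]
  act_one r := by rw [mul_one, c.χ_eta]
  act_mul r a a' := by rw [← mul_assoc, c.char_assoc]
  extends_regular r r' := by rw [c.map_mul_eta, c.χ_eta]

@[simp]
theorem toRightModuleExtendingRegular_act (c : RightCharacter k R A η) (r : R) (a : A) :
    c.toRightModuleExtendingRegular.act r a = c.χ (η r * a) :=
  rfl

end RightCharacter

variable (η) in
def RightModuleExtendingRegular.equivRightCharacter :
    RightModuleExtendingRegular k R A η ≃ RightCharacter k R A η where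
  toFun := RightModuleExtendingRegular.toRightCharacter
  invFun := RightCharacter.toRightModuleExtendingRegular
  left_inv d := RightModuleExtendingRegular.ext <| funext₂ fun r a =>
    (d.act_eq_act_one_eta_mul r a).symm
  right_inv c := RightCharacter.ext <| LinearMap.ext fun a => by simp

end

/-- Lemma 2.4: right `A`-module structures on `R` extending the
right regular `R`-module structure correspond bijectively to right characters
`χ : A → R`; the correspondence sends an action to `χ a = 1 ⋅ a`, and a right
character to the action `r ⋅ a = χ (η r * a)`. -/
theorem rightModuleExt_equiv_rightCharacter (k R A : Type*) [CommRing k] [Ring R]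
    [Algebra k R] [Ring A] [Algebra k A] (η : R →ₐ[k] A) :
    ∃ e : RightModuleExtendingRegular k R A η ≃ RightCharacter k R A η,
      (∀ (d : RightModuleExtendingRegular k R A η) (a : A),
        (e d).χ a = d.act 1 a) ∧
      (∀ (c : RightCharacter k R A η) (r : R) (a : A),
        (e.symm c).act r a = c.χ (η r * a)) :=
  ⟨RightModuleExtendingRegular.equivRightCharacter η, fun _ _ => rfl, fun _ _ _ => rfl⟩
end

section
/- Let B be a weak bialgebra over a commutative ring k and let ⊓ᴿ : B → B be the map ⊓ᴿ(b) = Σ 1₍₁₎ ε(b 1₍₂₎). Then the range R := ⊓ᴿ(B) is a unital k-subalgebra of B: it contains 1_B and is closed under the multiplication of B. -/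
/-!
Statement 4: In a weak bialgebra `B` over a commutative ring `k`, the range
`R := ⊓ᴿ(B)` of the map `⊓ᴿ b = Σ 1₍₁₎ ε (b 1₍₂₎)` is a unital `k`-subalgebra
of `B`: it contains `1_B` and is closed under multiplication.
(Paper: Section 3.2.2.)
-/

open TensorProduct

/-- The map `⊓ᴿ : B → B`, `b ↦ Σ 1₍₁₎ ε (b · 1₍₂₎)`, where `Δ 1 = Σ 1₍₁₎ ⊗ 1₍₂₎`. -/
noncomputable def sqcapR (k B : Type*) [CommRing k] [Ring B] [Algebra k B]
    (Δ : B →ₗ[k] B ⊗[k] B) (ε : B →ₗ[k] k) : B → B :=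
  fun b => TensorProduct.lift
    (((LinearMap.lsmul k B).comp (ε.comp (LinearMap.mulLeft k b))).flip) (Δ 1)


section Aux
variable {k B : Type*} [CommRing k] [Ring B] [Algebra k B]
variable (ε : B →ₗ[k] k)

noncomputable def Gmap (b : B) : B ⊗[k] B →ₗ[k] B :=
  TensorProduct.lift (((LinearMap.lsmul k B).comp (ε.comp (LinearMap.mulLeft k b))).flip)

@[simp] lemma Gmap_tmul (b y z : B) : Gmap ε b (y ⊗ₜ[k] z) = ε (b * z) • y := rfl

noncomputable def G'map (b : B) : (B ⊗[k] B) ⊗[k] B →ₗ[k] B ⊗[k] B :=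
  TensorProduct.lift
    (((LinearMap.lsmul k (B ⊗[k] B)).comp (ε.comp (LinearMap.mulLeft k b))).flip)

@[simp] lemma G'map_tmul (b : B) (p : B ⊗[k] B) (z : B) :
    G'map ε b (p ⊗ₜ[k] z) = ε (b * z) • p := rfl

variable (Δ : B →ₗ[k] B ⊗[k] B)

lemma step_i (b : B) (u : B ⊗[k] B) :
    Δ (Gmap ε b u) = G'map ε b ((TensorProduct.map Δ LinearMap.id) u) := by
  induction u using TensorProduct.induction_on with
  | zero => simp
  | tmul y z => simp
  | add u v hu hv => simp [map_add, hu, hv]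

lemma step_iv (b : B) (u v : B ⊗[k] B) :
    G'map ε b ((TensorProduct.assoc k B B B).symm
      (((TensorProduct.map LinearMap.id ((TensorProduct.mk k B B).flip 1)) u)
        * ((1 : B) ⊗ₜ[k] v)))
    = u * ((1 : B) ⊗ₜ[k] Gmap ε b v) := by
  induction u using TensorProduct.induction_on with
  | zero => simp
  | tmul x y =>
    induction v using TensorProduct.induction_on with
    | zero => simp
    | tmul p q =>
      simp [Algebra.TensorProduct.tmul_mul_tmul, mul_smul_comm, smul_tmul', tmul_smul]
    | add v w hv hw =>
      simp only [tmul_add, mul_add, map_add, hv, hw]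
  | add u w hu hw =>
    simp only [map_add, add_mul, hu, hw]

lemma step_iv' (b : B) (u v : B ⊗[k] B) :
    G'map ε b ((TensorProduct.assoc k B B B).symm
      (((1 : B) ⊗ₜ[k] v)
        * ((TensorProduct.map LinearMap.id ((TensorProduct.mk k B B).flip 1)) u)))
    = ((1 : B) ⊗ₜ[k] Gmap ε b v) * u := by
  induction u using TensorProduct.induction_on with
  | zero => simp
  | tmul x y =>
    induction v using TensorProduct.induction_on with
    | zero => simp
    | tmul p q =>
      simp [Algebra.TensorProduct.tmul_mul_tmul, mul_smul_comm, smul_mul_assoc,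
        smul_tmul', tmul_smul]
    | add v w hv hw =>
      simp only [tmul_add, add_mul, map_add, hv, hw]
  | add u w hu hw =>
    simp only [map_add, mul_add, hu, hw]

lemma rid_lemma (z : B) (u : B ⊗[k] B) :
    (TensorProduct.rid k B) ((TensorProduct.map LinearMap.id ε)
      (((1 : B) ⊗ₜ[k] z) * u)) = Gmap ε z u := by
  induction u using TensorProduct.induction_on with
  | zero => simp
  | tmul y w => simp [Algebra.TensorProduct.tmul_mul_tmul]
  | add u v hu hv => simp [mul_add, map_add, hu, hv]

end Aux

/-- the range of `⊓ᴿ` contains `1` and is closed under the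
multiplication of `B`. -/
theorem range_sqcapR_subalgebra (k B : Type*) [CommRing k] [Ring B] [Algebra k B]
    (Δ : B →ₗ[k] B ⊗[k] B) (ε : B →ₗ[k] k)
    -- coassociativity and counitality of (Δ, ε):
    (coassoc : ∀ b : B, (TensorProduct.assoc k B B B)
        ((TensorProduct.map Δ LinearMap.id) (Δ b))
        = (TensorProduct.map LinearMap.id Δ) (Δ b))
    (counit_left : ∀ b : B,
      (TensorProduct.lid k B) ((TensorProduct.map ε LinearMap.id) (Δ b)) = b)
    (counit_right : ∀ b : B,
      (TensorProduct.rid k B) ((TensorProduct.map LinearMap.id ε) (Δ b)) = b)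
    -- Δ is multiplicative:
    (Δ_mul : ∀ x y : B, Δ (x * y) = Δ x * Δ y)
    -- weak unitality: (Δ(1)⊗1)(1⊗Δ(1)) = (id⊗Δ)(Δ(1)) = (1⊗Δ(1))(Δ(1)⊗1) in B⊗B⊗B:
    (weak_unit₁ :
      ((TensorProduct.map LinearMap.id ((TensorProduct.mk k B B).flip 1)) (Δ 1))
          * ((1 : B) ⊗ₜ[k] (Δ 1))
        = (TensorProduct.map LinearMap.id Δ) (Δ 1))
    (weak_unit₂ :
      ((1 : B) ⊗ₜ[k] (Δ 1))
          * ((TensorProduct.map LinearMap.id ((TensorProduct.mk k B B).flip 1)) (Δ 1))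
        = (TensorProduct.map LinearMap.id Δ) (Δ 1))
    -- weak counitality: Σ ε(b 1₍₁₎) ε(1₍₂₎ b') = ε(b b') = Σ ε(b 1₍₂₎) ε(1₍₁₎ b'):
    (weak_counit₁ : ∀ b b' : B,
      TensorProduct.lift ((LinearMap.mul k k).compl₁₂
        (ε.comp (LinearMap.mulLeft k b)) (ε.comp (LinearMap.mulRight k b'))) (Δ 1)
      = ε (b * b'))
    (weak_counit₂ : ∀ b b' : B,
      TensorProduct.lift ((LinearMap.mul k k).compl₁₂
        (ε.comp (LinearMap.mulRight k b')) (ε.comp (LinearMap.mulLeft k b))) (Δ 1)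
      = ε (b * b')) :
    (1 : B) ∈ Set.range (sqcapR k B Δ ε) ∧
      ∀ x y : B, x ∈ Set.range (sqcapR k B Δ ε) → y ∈ Set.range (sqcapR k B Δ ε) →
        x * y ∈ Set.range (sqcapR k B Δ ε) := by
  have hsq : ∀ b : B, sqcapR k B Δ ε b = Gmap ε b (Δ 1) := fun b => rfl
  -- map Δ id (Δ 1) via coassoc
  have hco : (TensorProduct.map Δ LinearMap.id) (Δ 1)
      = (TensorProduct.assoc k B B B).symm
          ((TensorProduct.map LinearMap.id Δ) (Δ 1)) := by
    rw [← coassoc 1, LinearEquiv.symm_apply_apply]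
  -- L1 : Δ (⊓ᴿ b) = Δ 1 * (1 ⊗ ⊓ᴿ b)
  have L1 : ∀ b : B, Δ (Gmap ε b (Δ 1)) = Δ 1 * ((1 : B) ⊗ₜ[k] Gmap ε b (Δ 1)) := by
    intro b
    rw [step_i, hco, ← weak_unit₁, step_iv]
  -- L2 : Δ (⊓ᴿ b) = (1 ⊗ ⊓ᴿ b) * Δ 1
  have L2 : ∀ b : B, Δ (Gmap ε b (Δ 1)) = ((1 : B) ⊗ₜ[k] Gmap ε b (Δ 1)) * Δ 1 := by
    intro b
    rw [step_i, hco, ← weak_unit₂, step_iv']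
  -- commutation: (1 ⊗ ⊓ᴿ b) * Δ 1 = Δ 1 * (1 ⊗ ⊓ᴿ b)
  have comm : ∀ b : B,
      ((1 : B) ⊗ₜ[k] Gmap ε b (Δ 1)) * Δ 1 = Δ 1 * ((1 : B) ⊗ₜ[k] Gmap ε b (Δ 1)) := by
    intro b; rw [← L2, L1]
  -- Δ 1 is idempotent
  have hidem : Δ 1 * Δ 1 = Δ (1 : B) := by rw [← Δ_mul, one_mul]
  -- L4 : if Δ z = (1 ⊗ z) * Δ 1 then z = ⊓ᴿ z
  have L4 : ∀ z : B, Δ z = ((1 : B) ⊗ₜ[k] z) * Δ 1 → Gmap ε z (Δ 1) = z := by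
    intro z hz
    rw [← rid_lemma, ← hz, counit_right z]
  constructor
  · refine ⟨1, ?_⟩
    rw [hsq]
    have : Gmap ε (1 : B) (Δ 1)
        = (TensorProduct.rid k B) ((TensorProduct.map LinearMap.id ε) (Δ 1)) := by
      rw [← rid_lemma, ← Algebra.TensorProduct.one_def, one_mul]
    rw [this, counit_right]
  · rintro x y ⟨b, rfl⟩ ⟨c, rfl⟩
    rw [hsq, hsq]
    set x := Gmap ε b (Δ 1) with hx
    set y := Gmap ε c (Δ 1) with hy
    refine ⟨x * y, ?_⟩
    rw [hsq]
    apply L4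
    calc Δ (x * y) = Δ x * Δ y := Δ_mul x y
      _ = (((1 : B) ⊗ₜ[k] x) * Δ 1) * (Δ 1 * ((1 : B) ⊗ₜ[k] y)) := by rw [← L1, ← L2]
      _ = ((1 : B) ⊗ₜ[k] x) * (Δ 1 * Δ 1) * ((1 : B) ⊗ₜ[k] y) := by
          simp only [mul_assoc]
      _ = ((1 : B) ⊗ₜ[k] x) * (Δ 1 * ((1 : B) ⊗ₜ[k] y)) := by
          rw [hidem, mul_assoc]
      _ = ((1 : B) ⊗ₜ[k] x) * (((1 : B) ⊗ₜ[k] y) * Δ 1) := by rw [comm c]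
      _ = (((1 : B) ⊗ₜ[k] x) * ((1 : B) ⊗ₜ[k] y)) * Δ 1 := by rw [mul_assoc]
      _ = ((1 : B) ⊗ₜ[k] (x * y)) * Δ 1 := by
          rw [Algebra.TensorProduct.tmul_mul_tmul, one_mul]
end

section
/- Let B be a weak bialgebra over a commutative ring k, and let R := ⊓ᴿ(B) be the base subalgebra, where ⊓ᴿ(b) = Σ 1₍₁₎ ε(b 1₍₂₎). Then R is a Frobenius separable k-algebra: there exist a k-linear map ψ : R → k and an element Σᵢ eᵢ ⊗ fᵢ ∈ R ⊗_k R such that Σᵢ eᵢ fᵢ = 1_R, and Σᵢ eᵢ ψ(fᵢ r) = r = Σᵢ ψ(r eᵢ) fᵢ for all r ∈ R. -/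
/-!
Statement 5: The base subalgebra `R := ⊓ᴿ(B)` of a weak bialgebra `B` over a
commutative ring `k` is Frobenius separable: there are a `k`-linear functional
`ψ` (defined on `B`, hence on `R` by restriction) and a dual basis
`Σᵢ eᵢ ⊗ fᵢ ∈ R ⊗ R` with `Σᵢ eᵢ fᵢ = 1` and
`Σᵢ eᵢ ψ(fᵢ r) = r = Σᵢ ψ(r eᵢ) fᵢ` for all `r ∈ R`.
(Paper: Section 3.2.2, observation of Schauenburg.)
-/

open TensorProduct

theorem exists_fin_rep {R M N : Type*} [CommRing R] [AddCommGroup M] [AddCommGroup N]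
    [Module R M] [Module R N] (x : M ⊗[R] N) :
    ∃ (n : ℕ) (a : Fin n → M) (b : Fin n → N), x = ∑ i, a i ⊗ₜ[R] b i := by
  obtain ⟨S, h⟩ := TensorProduct.exists_finset x
  refine ⟨S.card, fun i => ((S.equivFin.symm i : S) : M × N).1,
    fun i => ((S.equivFin.symm i : S) : M × N).2, ?_⟩
  rw [h, ← Finset.sum_attach S (fun p => p.1 ⊗ₜ[R] p.2)]
  exact (Equiv.sum_comp S.equivFin.symm (fun p => ((p : M × N)).1 ⊗ₜ[R] ((p : M × N)).2)).symm


/-- The contraction map `x ⊗ y ↦ ε (c * y) • x`, as used in `sqcapR`. -/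
noncomputable def Fc (k B : Type*) [CommRing k] [Ring B] [Algebra k B]
    (ε : B →ₗ[k] k) (c : B) : B ⊗[k] B →ₗ[k] B :=
  TensorProduct.lift (((LinearMap.lsmul k B).comp (ε.comp (LinearMap.mulLeft k c))).flip)

lemma Fc_tmul (k B : Type*) [CommRing k] [Ring B] [Algebra k B]
    (ε : B →ₗ[k] k) (c x y : B) :
    Fc k B ε c (x ⊗ₜ[k] y) = ε (c * y) • x := by
  simp [Fc, TensorProduct.lift.tmul]



/-- the base algebra `R = ⊓ᴿ(B)` of a weak bialgebra is
Frobenius separable. -/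
theorem base_algebra_frobenius_separable (k B : Type*) [CommRing k] [Ring B]
    [Algebra k B]
    (Δ : B →ₗ[k] B ⊗[k] B) (ε : B →ₗ[k] k)
    -- coassociativity and counitality of (Δ, ε):
    (coassoc : ∀ b : B, (TensorProduct.assoc k B B B)
        ((TensorProduct.map Δ LinearMap.id) (Δ b))
        = (TensorProduct.map LinearMap.id Δ) (Δ b))
    (counit_left : ∀ b : B,
      (TensorProduct.lid k B) ((TensorProduct.map ε LinearMap.id) (Δ b)) = b)
    (counit_right : ∀ b : B,
      (TensorProduct.rid k B) ((TensorProduct.map LinearMap.id ε) (Δ b)) = b)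
    -- Δ is multiplicative:
    (Δ_mul : ∀ x y : B, Δ (x * y) = Δ x * Δ y)
    -- weak unitality: (Δ(1)⊗1)(1⊗Δ(1)) = (id⊗Δ)(Δ(1)) = (1⊗Δ(1))(Δ(1)⊗1) in B⊗B⊗B:
    (weak_unit₁ :
      ((TensorProduct.map LinearMap.id ((TensorProduct.mk k B B).flip 1)) (Δ 1))
          * ((1 : B) ⊗ₜ[k] (Δ 1))
        = (TensorProduct.map LinearMap.id Δ) (Δ 1))
    (weak_unit₂ :
      ((1 : B) ⊗ₜ[k] (Δ 1))
          * ((TensorProduct.map LinearMap.id ((TensorProduct.mk k B B).flip 1)) (Δ 1))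
        = (TensorProduct.map LinearMap.id Δ) (Δ 1))
    -- weak counitality: Σ ε(b 1₍₁₎) ε(1₍₂₎ b') = ε(b b') = Σ ε(b 1₍₂₎) ε(1₍₁₎ b'):
    (weak_counit₁ : ∀ b b' : B,
      TensorProduct.lift ((LinearMap.mul k k).compl₁₂
        (ε.comp (LinearMap.mulLeft k b)) (ε.comp (LinearMap.mulRight k b'))) (Δ 1)
      = ε (b * b'))
    (weak_counit₂ : ∀ b b' : B,
      TensorProduct.lift ((LinearMap.mul k k).compl₁₂
        (ε.comp (LinearMap.mulRight k b')) (ε.comp (LinearMap.mulLeft k b))) (Δ 1)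
      = ε (b * b')) :
    ∃ (ψ : B →ₗ[k] k) (n : ℕ) (e f : Fin n → B),
      (∀ i, e i ∈ Set.range (sqcapR k B Δ ε) ∧ f i ∈ Set.range (sqcapR k B Δ ε)) ∧
      (∑ i, e i * f i) = 1 ∧
      ∀ r ∈ Set.range (sqcapR k B Δ ε),
        (∑ i, ψ (f i * r) • e i) = r ∧ (∑ i, ψ (r * e i) • f i) = r := by
  classical
  obtain ⟨n, a, b, hab⟩ := exists_fin_rep (Δ 1)
  set S : B → B := sqcapR k B Δ ε with hS
  have hSF : ∀ c, S c = Fc k B ε c (Δ 1) := fun c => rfl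
  have hP : ∀ c, S c = ∑ i, ε (c * b i) • a i := by
    intro c
    rw [hSF, hab, map_sum]
    simp [Fc_tmul]
  -- the linear-map version of S
  set Plin : B →ₗ[k] B := ∑ i, ((ε ∘ₗ LinearMap.mulRight k (b i)).smulRight (a i)) with hPlin
  have hPl : ∀ c, Plin c = S c := by
    intro c
    rw [hP, hPlin]
    simp [LinearMap.sum_apply]
  -- weak counit identities in summed form
  have wc1 : ∀ u v : B, ∑ i, ε (u * a i) * ε (b i * v) = ε (u * v) := by
    intro u v
    have h := weak_counit₁ u v
    rw [hab, map_sum] at h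
    simpa using h
  have wc2 : ∀ u v : B, ∑ i, ε (a i * v) * ε (u * b i) = ε (u * v) := by
    intro u v
    have h := weak_counit₂ u v
    rw [hab, map_sum] at h
    simpa using h
  -- the map Φ = id ⊗ (ε ⊗ id)
  set Φ : B ⊗[k] (B ⊗[k] B) →ₗ[k] B ⊗[k] B :=
    TensorProduct.map LinearMap.id
      ((TensorProduct.lid k B).toLinearMap ∘ₗ TensorProduct.map ε LinearMap.id) with hΦ
  have Φ_tmul : ∀ x y z : B, Φ (x ⊗ₜ[k] (y ⊗ₜ[k] z)) = ε y • (x ⊗ₜ[k] z) := by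
    intro x y z
    simp [hΦ, TensorProduct.tmul_smul]
  have Φ_rhs : Φ ((TensorProduct.map LinearMap.id Δ) (Δ 1)) = Δ 1 := by
    conv_lhs => rw [hab]
    rw [map_sum, map_sum]
    conv_rhs => rw [hab]
    refine Finset.sum_congr rfl fun i _ => ?_
    rw [TensorProduct.map_tmul, hΦ, TensorProduct.map_tmul]
    simp only [LinearMap.id_coe, id_eq, LinearMap.coe_comp, Function.comp_apply,
      LinearEquiv.coe_coe]
    rw [counit_left]
  -- L1 : ∑ j ∑ i ε (a j * b i) • (a i ⊗ b j) = Δ 1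
  have L1 : ∑ j, ∑ i, ε (a j * b i) • (a i ⊗ₜ[k] b j) = Δ 1 := by
    have h := congrArg Φ weak_unit₂
    rw [Φ_rhs] at h
    rw [← h, hab]
    simp only [tmul_sum, map_sum, Finset.sum_mul, Finset.mul_sum,
      TensorProduct.map_tmul, TensorProduct.mk_apply, LinearMap.flip_apply,
      LinearMap.id_coe, id_eq, Algebra.TensorProduct.tmul_mul_tmul, one_mul,
      mul_one, Φ_tmul]
    exact Finset.sum_comm
  -- L3 : ∑ i ∑ j ε (b i * a j) • (a i ⊗ b j) = Δ 1
  have L3 : ∑ i, ∑ j, ε (b i * a j) • (a i ⊗ₜ[k] b j) = Δ 1 := by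
    have h := congrArg Φ weak_unit₁
    rw [Φ_rhs] at h
    rw [← h, hab]
    simp only [tmul_sum, map_sum, Finset.sum_mul, Finset.mul_sum,
      TensorProduct.map_tmul, TensorProduct.mk_apply, LinearMap.flip_apply,
      LinearMap.id_coe, id_eq, Algebra.TensorProduct.tmul_mul_tmul, one_mul,
      mul_one, Φ_tmul]
    exact Finset.sum_comm
  -- FL1 : contracting L1 with Fc c gives ∑ j, ε (c * b j) • S (a j) = S c
  have FL1 : ∀ c : B, ∑ j, ε (c * b j) • S (a j) = S c := by
    intro c
    have h := congrArg (Fc k B ε c) L1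
    rw [← hSF] at h
    rw [← h, map_sum]
    refine Finset.sum_congr rfl fun j _ => ?_
    rw [map_sum, hP, Finset.smul_sum]
    refine Finset.sum_congr rfl fun i _ => ?_
    rw [map_smul, Fc_tmul, smul_smul, smul_smul, mul_comm]
  -- idempotence of S
  have Sidem : ∀ c : B, S (S c) = S c := by
    intro c
    conv_rhs => rw [← FL1 c]
    simp only [hP]
    simp only [Finset.sum_mul, map_sum, Finset.sum_smul, smul_mul_assoc, map_smul,
      smul_eq_mul, Finset.smul_sum, smul_smul]
    exact Finset.sum_comm
  -- Gc r : x ⊗ y ↦ ε (y * r) • x, applied to L1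
  have GL1 : ∀ r : B, ∑ j, ε (b j * r) • S (a j) = ∑ j, ε (b j * r) • a j := by
    intro r
    set G : B ⊗[k] B →ₗ[k] B :=
      TensorProduct.lift (((LinearMap.lsmul k B).comp (ε.comp (LinearMap.mulRight k r))).flip)
      with hG
    have hGt : ∀ x y : B, G (x ⊗ₜ[k] y) = ε (y * r) • x := by
      intro x y; simp [hG, TensorProduct.lift.tmul]
    have h := congrArg G L1
    rw [hab] at h
    rw [map_sum, map_sum] at h
    simp only [map_sum, map_smul, hGt, smul_smul] at h
    rw [← h]
    refine Finset.sum_congr rfl fun j _ => ?_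
    rw [hP, Finset.smul_sum]
    refine Finset.sum_congr rfl fun i _ => ?_
    rw [smul_smul, mul_comm]
  -- FL3 : ∑ i, ε (b i * S c) • a i = S c
  have FL3 : ∀ c : B, ∑ i, ε (b i * S c) • a i = S c := by
    intro c
    have h := congrArg (Fc k B ε c) L3
    rw [← hSF] at h
    calc ∑ i, ε (b i * S c) • a i
        = Fc k B ε c (∑ i, ∑ j, ε (b i * a j) • a i ⊗ₜ[k] b j) := by
          rw [map_sum]
          refine Finset.sum_congr rfl fun i _ => ?_
          rw [map_sum, hP c]
          simp only [Finset.mul_sum, map_sum, mul_smul_comm, map_smul, smul_eq_mul,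
            Finset.sum_smul, Fc_tmul, smul_smul]
          refine Finset.sum_congr rfl fun j _ => ?_
          rw [mul_comm]
      _ = S c := h
  -- multiplication map applied to L1
  have ML1 : ∑ j, S (a j) * S (b j) = ∑ j, a j * S (b j) := by
    set M : B ⊗[k] B →ₗ[k] B :=
      (LinearMap.mul' k B) ∘ₗ (TensorProduct.map LinearMap.id Plin) with hM
    have hMt : ∀ x y : B, M (x ⊗ₜ[k] y) = x * Plin y := by
      intro x y; simp [hM, LinearMap.mul'_apply]
    have h := congrArg M L1
    rw [hab] at h
    rw [map_sum, map_sum] at h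
    simp only [map_sum, map_smul, hMt] at h
    rw [← Finset.sum_congr rfl fun j _ => (rfl : S (a j) * S (b j) = S (a j) * S (b j))]
    calc ∑ j, S (a j) * S (b j) = ∑ j, ∑ i, ε (a j * b i) • (a i * Plin (b j)) := by
          refine Finset.sum_congr rfl fun j _ => ?_
          rw [hPl, hP (a j), Finset.sum_mul]
          refine Finset.sum_congr rfl fun i _ => ?_
          rw [smul_mul_assoc]
      _ = ∑ j, a j * Plin (b j) := h
      _ = ∑ j, a j * S (b j) := by
          refine Finset.sum_congr rfl fun j _ => ?_
          rw [hPl]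
  -- unit identity : ∑ j, a j * S (b j) = 1
  have unitid : ∑ j, a j * S (b j) = 1 := by
    have hDD : Δ 1 = Δ 1 * Δ 1 := by
      have := Δ_mul 1 1
      rw [one_mul] at this
      exact this
    set R : B ⊗[k] B →ₗ[k] B :=
      (TensorProduct.rid k B).toLinearMap ∘ₗ TensorProduct.map LinearMap.id ε with hR
    have hRt : ∀ x y : B, R (x ⊗ₜ[k] y) = ε y • x := by
      intro x y; simp [hR]
    calc ∑ j, a j * S (b j)
        = ∑ j, ∑ i, ε (b j * b i) • (a j * a i) := by
          refine Finset.sum_congr rfl fun j _ => ?_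
          rw [hP, Finset.mul_sum]
          simp only [mul_smul_comm]
      _ = R (∑ j, ∑ i, (a j * a i) ⊗ₜ[k] (b j * b i)) := by
          rw [map_sum]
          refine Finset.sum_congr rfl fun j _ => ?_
          rw [map_sum]
          exact Finset.sum_congr rfl fun i _ => (hRt _ _).symm
      _ = R (Δ 1 * Δ 1) := by
          congr 1
          conv_rhs => rw [hab]
          rw [Finset.sum_mul_sum]
          simp only [Algebra.TensorProduct.tmul_mul_tmul]
      _ = R (Δ 1) := by rw [← hDD]
      _ = 1 := counit_right 1
  -- the map N r : x ⊗ y ↦ ε (r * x) • Plin y, applied to L1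
  have NL1 : ∀ r : B, ∑ j, ε (r * S (a j)) • S (b j) = ∑ j, ε (r * a j) • S (b j) := by
    intro r
    set N : B ⊗[k] B →ₗ[k] B :=
      Plin ∘ₗ ((TensorProduct.lid k B).toLinearMap ∘ₗ
        TensorProduct.map (ε ∘ₗ LinearMap.mulLeft k r) LinearMap.id) with hN
    have hNt : ∀ x y : B, N (x ⊗ₜ[k] y) = ε (r * x) • Plin y := by
      intro x y; simp [hN]
    have h := congrArg N L1
    rw [hab] at h
    rw [map_sum, map_sum] at h
    simp only [map_sum, map_smul, hNt] at h
    calc ∑ j, ε (r * S (a j)) • S (b j)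
        = ∑ j, ∑ i, ε (a j * b i) • ε (r * a i) • Plin (b j) := by
          refine Finset.sum_congr rfl fun j _ => ?_
          rw [hP (a j), ← hPl]
          simp only [Finset.mul_sum, map_sum, mul_smul_comm, map_smul, smul_eq_mul,
            Finset.sum_smul, smul_smul]
      _ = ∑ j, ε (r * a j) • Plin (b j) := h
      _ = ∑ j, ε (r * a j) • S (b j) := by
          refine Finset.sum_congr rfl fun j _ => ?_
          rw [hPl]
  refine ⟨ε, n, fun i => S (a i), fun i => S (b i), fun i => ⟨⟨a i, rfl⟩, ⟨b i, rfl⟩⟩, ?_, ?_⟩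
  · rw [ML1, unitid]
  · rintro r ⟨c, rfl⟩
    constructor
    · -- ∑ i, ε (S (b i) * S c) • S (a i) = S c
      calc ∑ i, ε (S (b i) * S c) • S (a i)
          = ∑ i, ε (b i * S c) • S (a i) := by
            refine Finset.sum_congr rfl fun i _ => ?_
            congr 1
            rw [← wc2 (b i) (S c), hP (b i), Finset.sum_mul, map_sum]
            refine Finset.sum_congr rfl fun s _ => ?_
            rw [smul_mul_assoc, map_smul, smul_eq_mul, mul_comm]
        _ = ∑ i, ε (b i * S c) • a i := GL1 (S c)
        _ = S c := FL3 c
    · -- ∑ i, ε (S c * S (a i)) • S (b i) = S c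
      calc ∑ i, ε (S c * S (a i)) • S (b i)
          = ∑ i, ε (S c * a i) • S (b i) := NL1 (S c)
        _ = ∑ i, ∑ s, (ε (S c * a i) * ε (b i * b s)) • a s := by
            refine Finset.sum_congr rfl fun i _ => ?_
            rw [hP (b i), Finset.smul_sum]
            refine Finset.sum_congr rfl fun s _ => ?_
            rw [smul_smul]
        _ = ∑ s, ∑ i, (ε (S c * a i) * ε (b i * b s)) • a s := Finset.sum_comm
        _ = ∑ s, (∑ i, ε (S c * a i) * ε (b i * b s)) • a s := by
            refine Finset.sum_congr rfl fun s _ => ?_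
            rw [Finset.sum_smul]
        _ = ∑ s, ε (S c * b s) • a s := by
            refine Finset.sum_congr rfl fun s _ => ?_
            rw [wc1 (S c) (b s)]
        _ = S (S c) := (hP (S c)).symm
        _ = S c := Sidem c
end

section
/- Let H be a Hopf algebra over a commutative ring k, with coproduct Δ(h) = Σ h₍₁₎ ⊗ h₍₂₎ and counit ε, and let R be a left H-module algebra. Then the k-module B := R ⊗_k H ⊗_k R, equipped with the k-bilinear multiplication determined by (r₁ ⊗ h ⊗ r₂)(r₁' ⊗ h' ⊗ r₂') = Σ r₁ (h₍₁₎ · r₁') ⊗ h₍₂₎ h' ⊗ (h₍₃₎ · r₂') r₂ (where Σ h₍₁₎ ⊗ h₍₂₎ ⊗ h₍₃₎ = (Δ⊗id)(Δ(h))), is an associative unital k-algebra with unit 1_R ⊗ 1_H ⊗ 1_R. -/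
/-!
Statement 6: For a Hopf algebra `H` over a commutative ring `k` and a left
`H`-module algebra `A`, the Connes–Moscovici multiplication
`(a₁ ⊗ h ⊗ a₂)(a₁' ⊗ h' ⊗ a₂') = Σ a₁ (h₍₁₎ · a₁') ⊗ h₍₂₎ h' ⊗ (h₍₃₎ · a₂') a₂`
on `A ⊗ H ⊗ A` is associative with unit `1 ⊗ 1 ⊗ 1`.
(Paper: Section 3.4.6.)
-/

open TensorProduct

set_option maxHeartbeats 2000000
set_option synthInstance.maxHeartbeats 400000

namespace CMaux

variable (k H A : Type*) [CommRing k] [Ring H] [HopfAlgebra k H] [Ring A] [Algebra k A]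

theorem t3ind {R M N P : Type*} [CommSemiring R] [AddCommMonoid M] [AddCommMonoid N]
    [AddCommMonoid P] [Module R M] [Module R N] [Module R P]
    {Q : M ⊗[R] (N ⊗[R] P) → Prop} (hz : Q 0)
    (ht : ∀ x y z, Q (x ⊗ₜ[R] (y ⊗ₜ[R] z)))
    (ha : ∀ u v, Q u → Q v → Q (u + v)) : ∀ u, Q u := by
  intro u
  induction u using TensorProduct.induction_on with
  | zero => exact hz
  | tmul x w =>
    induction w using TensorProduct.induction_on with
    | zero => simpa using hz
    | tmul y z => exact ht x y z
    | add w₁ w₂ h₁ h₂ => rw [tmul_add]; exact ha _ _ h₁ h₂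
  | add u v h₁ h₂ => exact ha _ _ h₁ h₂

noncomputable def D2 : H →ₗ[k] H ⊗[k] (H ⊗[k] H) :=
  LinearMap.lTensor H (Coalgebra.comul (R := k)) ∘ₗ Coalgebra.comul

noncomputable def TT (act : H →ₗ[k] A →ₗ[k] A) (a₁ a₁' : A) (h' : H) (a₂ a₂' : A) :
    (H ⊗[k] (H ⊗[k] H)) →ₗ[k] (A ⊗[k] (H ⊗[k] A)) :=
  TensorProduct.map ((LinearMap.mulLeft k a₁).comp (act.flip a₁'))
    (TensorProduct.map (LinearMap.mulRight k h')
      ((LinearMap.mulRight k a₂).comp (act.flip a₂')))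

theorem TT_tmul (act : H →ₗ[k] A →ₗ[k] A) (a₁ a₁' : A) (h' : H) (a₂ a₂' : A) (p q r : H) :
    TT k H A act a₁ a₁' h' a₂ a₂' (p ⊗ₜ[k] (q ⊗ₜ[k] r))
      = (a₁ * act p a₁') ⊗ₜ[k] ((q * h') ⊗ₜ[k] (act r a₂' * a₂)) := by
  simp [TT]

noncomputable def gam : H ⊗[k] (H ⊗[k] (H ⊗[k] H)) →ₗ[k] (H ⊗[k] (H ⊗[k] H)) ⊗[k] H :=
  (TensorProduct.assoc k H (H ⊗[k] H) H).symm.toLinearMap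
    ∘ₗ LinearMap.lTensor H (TensorProduct.assoc k H H H).symm.toLinearMap

theorem gam_tmul (x y z w : H) :
    gam k H (x ⊗ₜ[k] (y ⊗ₜ[k] (z ⊗ₜ[k] w))) = (x ⊗ₜ[k] (y ⊗ₜ[k] z)) ⊗ₜ[k] w := by
  simp [gam]

noncomputable def Xi1 : H ⊗[k] (H ⊗[k] H) →ₗ[k] H ⊗[k] ((H ⊗[k] (H ⊗[k] H)) ⊗[k] H) :=
  LinearMap.lTensor H (LinearMap.rTensor H (D2 k H))

theorem Xi1_tmul (p q r : H) :
    Xi1 k H (p ⊗ₜ[k] (q ⊗ₜ[k] r)) = p ⊗ₜ[k] ((D2 k H q) ⊗ₜ[k] r) := by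
  simp [Xi1]

noncomputable def Xi2 : H ⊗[k] (H ⊗[k] H) →ₗ[k] H ⊗[k] ((H ⊗[k] (H ⊗[k] H)) ⊗[k] H) :=
  LinearMap.lTensor H (gam k H)
    ∘ₗ (TensorProduct.assoc k H H (H ⊗[k] (H ⊗[k] H))).toLinearMap
    ∘ₗ TensorProduct.map (Coalgebra.comul (R := k))
        (LinearMap.lTensor H (Coalgebra.comul (R := k)))

theorem Xi2_tmul (p q r : H) :
    Xi2 k H (p ⊗ₜ[k] (q ⊗ₜ[k] r))
      = LinearMap.lTensor H (gam k H)
          ((TensorProduct.assoc k H H (H ⊗[k] (H ⊗[k] H)))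
            ((Coalgebra.comul (R := k) p) ⊗ₜ[k] (q ⊗ₜ[k] (Coalgebra.comul (R := k) r)))) := by
  simp [Xi2]

noncomputable def MergeB : (H ⊗[k] (H ⊗[k] H))
    →ₗ[k] (H ⊗[k] ((H ⊗[k] (H ⊗[k] H)) ⊗[k] H)) →ₗ[k] (H ⊗[k] ((H ⊗[k] (H ⊗[k] H)) ⊗[k] H)) :=
  (LinearMap.lTensorHom H) ∘ₗ (LinearMap.rTensorHom H)
    ∘ₗ (LinearMap.mul k (H ⊗[k] (H ⊗[k] H))).flip

theorem MergeB_tmul (θ : H ⊗[k] (H ⊗[k] H)) (g1 g5 : H) (σ : H ⊗[k] (H ⊗[k] H)) :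
    MergeB k H θ (g1 ⊗ₜ[k] (σ ⊗ₜ[k] g5)) = g1 ⊗ₜ[k] ((σ * θ) ⊗ₜ[k] g5) := by
  simp [MergeB]

noncomputable def G5 (act : H →ₗ[k] A →ₗ[k] A) (a b c d e f : A) (l : H) :
    (H ⊗[k] ((H ⊗[k] (H ⊗[k] H)) ⊗[k] H)) →ₗ[k] (A ⊗[k] (H ⊗[k] A)) :=
  (TensorProduct.map ((LinearMap.mulLeft k a) ∘ₗ (LinearMap.mul' k A)) LinearMap.id)
    ∘ₗ (TensorProduct.assoc k A A (H ⊗[k] A)).symm.toLinearMap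
    ∘ₗ (LinearMap.lTensor A
        ((LinearMap.lTensor A ((LinearMap.lTensor H (LinearMap.mul' k A))
            ∘ₗ (TensorProduct.assoc k H A A).toLinearMap))
          ∘ₗ (TensorProduct.assoc k A (H ⊗[k] A) A).toLinearMap))
    ∘ₗ (TensorProduct.map (act.flip c)
        (TensorProduct.map
          (TensorProduct.map (act.flip e)
            (TensorProduct.map (LinearMap.mulRight k l) (act.flip f)))
          ((LinearMap.mulRight k b) ∘ₗ (act.flip d))))

theorem G5_tmul (act : H →ₗ[k] A →ₗ[k] A) (a b c d e f : A) (l : H) (g1 p q r g5 : H) :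
    G5 k H A act a b c d e f l (g1 ⊗ₜ[k] ((p ⊗ₜ[k] (q ⊗ₜ[k] r)) ⊗ₜ[k] g5))
      = (a * (act g1 c * act p e)) ⊗ₜ[k]
          ((q * l) ⊗ₜ[k] (act r f * (act g5 d * b))) := by
  simp [G5]

theorem lTensor_comul_mul (u v : H ⊗[k] H) :
    LinearMap.lTensor H (Coalgebra.comul (R := k)) (u * v)
      = LinearMap.lTensor H (Coalgebra.comul (R := k)) u
        * LinearMap.lTensor H (Coalgebra.comul (R := k)) v := by
  have hΦ : ∀ w : H ⊗[k] H,
      (Algebra.TensorProduct.map (AlgHom.id k H) (Bialgebra.comulAlgHom k H)) w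
        = LinearMap.lTensor H (Coalgebra.comul (R := k)) w := by
    intro w
    induction w using TensorProduct.induction_on with
    | zero => simp
    | tmul x y => simp [Bialgebra.comulAlgHom_apply]
    | add u v hu hv => simp [map_add, hu, hv]
  rw [← hΦ, ← hΦ, ← hΦ, map_mul]

theorem D2_mul (q h : H) : D2 k H (q * h) = D2 k H q * D2 k H h := by
  simp only [D2, LinearMap.comp_apply, Bialgebra.comul_mul, lTensor_comul_mul]

theorem D2_one : D2 k H (1 : H) = (1 : H) ⊗ₜ[k] ((1 : H) ⊗ₜ[k] (1 : H)) := by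
  simp only [D2, LinearMap.comp_apply, Bialgebra.comul_one, Algebra.TensorProduct.one_def,
    LinearMap.lTensor_tmul, Bialgebra.comul_one]

theorem nat1 {R M N P Q : Type*} [CommSemiring R] [AddCommMonoid M] [AddCommMonoid N]
    [AddCommMonoid P] [AddCommMonoid Q] [Module R M] [Module R N] [Module R P] [Module R Q]
    (f : N →ₗ[R] P) :
    (LinearMap.rTensor Q (LinearMap.lTensor M f))
        ∘ₗ (TensorProduct.assoc R M N Q).symm.toLinearMap
      = (TensorProduct.assoc R M P Q).symm.toLinearMap
          ∘ₗ LinearMap.lTensor M (LinearMap.rTensor Q f) := by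
  ext m n q; simp

theorem nat2 {R M N P Q : Type*} [CommSemiring R] [AddCommMonoid M] [AddCommMonoid N]
    [AddCommMonoid P] [AddCommMonoid Q] [Module R M] [Module R N] [Module R P] [Module R Q]
    (f : P →ₗ[R] Q) :
    (TensorProduct.assoc R M N Q).toLinearMap ∘ₗ (LinearMap.lTensor (M ⊗[R] N) f)
        ∘ₗ (TensorProduct.assoc R M N P).symm.toLinearMap
      = LinearMap.lTensor M (LinearMap.lTensor N f) := by
  ext m n p; simp

theorem iota_eq : (LinearMap.rTensor H (D2 k H)) ∘ₗ (Coalgebra.comul (R := k))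
    = gam k H ∘ₗ (LinearMap.lTensor H (D2 k H) ∘ₗ Coalgebra.comul) := by
  apply LinearMap.ext; intro y
  simp only [LinearMap.comp_apply]
  calc LinearMap.rTensor H (D2 k H) (Coalgebra.comul y)
      = LinearMap.rTensor H (LinearMap.lTensor H Coalgebra.comul)
          (LinearMap.rTensor H (Coalgebra.comul (R := k)) (Coalgebra.comul y)) := by
        rw [D2, LinearMap.rTensor_comp, LinearMap.comp_apply]
    _ = LinearMap.rTensor H (LinearMap.lTensor H Coalgebra.comul)
          ((TensorProduct.assoc k H H H).symm
            (LinearMap.lTensor H (Coalgebra.comul (R := k)) (Coalgebra.comul y))) := by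
        rw [Coalgebra.coassoc_symm_apply]
    _ = (TensorProduct.assoc k H (H ⊗[k] H) H).symm
          (LinearMap.lTensor H (LinearMap.rTensor H (Coalgebra.comul (R := k)))
            (LinearMap.lTensor H (Coalgebra.comul (R := k)) (Coalgebra.comul y))) := by
        have := LinearMap.congr_fun
          (nat1 (R := k) (M := H) (Q := H) (Coalgebra.comul (R := k)))
          (LinearMap.lTensor H (Coalgebra.comul (R := k)) (Coalgebra.comul y))
        simpa [LinearMap.comp_apply] using this
    _ = (TensorProduct.assoc k H (H ⊗[k] H) H).symm
          (LinearMap.lTensor H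
            ((LinearMap.rTensor H (Coalgebra.comul (R := k))) ∘ₗ Coalgebra.comul)
            (Coalgebra.comul y)) := by
        rw [LinearMap.lTensor_comp, LinearMap.comp_apply]
    _ = (TensorProduct.assoc k H (H ⊗[k] H) H).symm
          (LinearMap.lTensor H
            ((TensorProduct.assoc k H H H).symm.toLinearMap ∘ₗ
              (LinearMap.lTensor H (Coalgebra.comul (R := k)) ∘ₗ Coalgebra.comul))
            (Coalgebra.comul y)) := by
        rw [Coalgebra.coassoc_symm]
    _ = gam k H (LinearMap.lTensor H (D2 k H) (Coalgebra.comul y)) := by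
        rw [LinearMap.lTensor_comp, LinearMap.comp_apply, gam]
        simp only [LinearMap.comp_apply, LinearEquiv.coe_coe, D2]

theorem key (g : H) : Xi1 k H (D2 k H g) = Xi2 k H (D2 k H g) := by
  have hXi1 : Xi1 k H (D2 k H g)
      = LinearMap.lTensor H (gam k H)
          (LinearMap.lTensor H (LinearMap.lTensor H (D2 k H) ∘ₗ Coalgebra.comul)
            (Coalgebra.comul g)) := by
    rw [Xi1,
      show D2 k H g = LinearMap.lTensor H (Coalgebra.comul (R := k)) (Coalgebra.comul g)
        from rfl,
      ← LinearMap.lTensor_comp_apply, iota_eq, LinearMap.lTensor_comp, LinearMap.comp_apply]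
  have hA : TensorProduct.map (Coalgebra.comul (R := k)) (LinearMap.lTensor H Coalgebra.comul)
        ∘ₗ LinearMap.lTensor H (Coalgebra.comul (R := k))
      = TensorProduct.map (Coalgebra.comul (R := k)) (D2 k H) := by
    have hl : LinearMap.lTensor H (Coalgebra.comul (R := k))
        = TensorProduct.map (LinearMap.id : H →ₗ[k] H)
            (Coalgebra.comul (R := k) (A := H)) := rfl
    rw [hl, ← TensorProduct.map_comp, LinearMap.comp_id]; rfl
  have hB : TensorProduct.map (Coalgebra.comul (R := k)) (D2 k H)
      = LinearMap.lTensor (H ⊗[k] H) (D2 k H)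
          ∘ₗ LinearMap.rTensor H (Coalgebra.comul (R := k)) := by
    exact (LinearMap.lTensor_comp_rTensor (R := k)
      (f := (Coalgebra.comul : H →ₗ[k] H ⊗[k] H)) (g := D2 k H)).symm
  have hXi2 : Xi2 k H (D2 k H g)
      = LinearMap.lTensor H (gam k H)
          (LinearMap.lTensor H (LinearMap.lTensor H (D2 k H) ∘ₗ Coalgebra.comul)
            (Coalgebra.comul g)) := by
    rw [Xi2, LinearMap.comp_apply, LinearMap.comp_apply]
    rw [show (D2 k H g) = LinearMap.lTensor H (Coalgebra.comul (R := k)) (Coalgebra.comul g)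
        from rfl]
    rw [← LinearMap.comp_apply
      (TensorProduct.map (Coalgebra.comul (R := k)) (LinearMap.lTensor H Coalgebra.comul)),
      hA, hB, LinearMap.comp_apply]
    rw [show LinearMap.rTensor H (Coalgebra.comul (R := k)) (Coalgebra.comul g)
        = (TensorProduct.assoc k H H H).symm
            (LinearMap.lTensor H (Coalgebra.comul (R := k)) (Coalgebra.comul g))
      from (Coalgebra.coassoc_symm_apply g).symm]
    have := LinearMap.congr_fun
      (nat2 (R := k) (M := H) (N := H) (P := H) (f := D2 k H))
      (LinearMap.lTensor H (Coalgebra.comul (R := k)) (Coalgebra.comul g))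
    simp only [LinearMap.comp_apply, LinearEquiv.coe_coe] at this
    rw [LinearEquiv.coe_coe, this]
    simp only [LinearMap.lTensor_comp, LinearMap.comp_apply]
  rw [hXi1, hXi2]

theorem TT_unit (act : H →ₗ[k] A →ₗ[k] A)
    (hact1 : ∀ h : H, act h (1 : A) = Coalgebra.counit (R := k) h • (1 : A))
    (a b : A) (g : H) :
    TT k H A act a 1 1 b 1 (D2 k H g) = a ⊗ₜ[k] (g ⊗ₜ[k] b) := by
  have hS1 : (act.flip (1 : A))
      = (Algebra.linearMap k A) ∘ₗ (Coalgebra.counit (R := k) (A := H)) := by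
    apply LinearMap.ext; intro h
    simp [hact1, Algebra.algebraMap_eq_smul_one]
  have hG : LinearMap.mulRight k (1 : H) = LinearMap.id := by
    apply LinearMap.ext; intro x; simp
  have hJ : TensorProduct.map (LinearMap.id : H →ₗ[k] H)
        ((LinearMap.mulRight k b) ∘ₗ act.flip 1) ∘ₗ (Coalgebra.comul (R := k))
      = (TensorProduct.mk k H A).flip b := by
    rw [hS1]
    have split : TensorProduct.map (LinearMap.id : H →ₗ[k] H)
          ((LinearMap.mulRight k b) ∘ₗ ((Algebra.linearMap k A)
            ∘ₗ (Coalgebra.counit (R := k) (A := H))))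
        = LinearMap.lTensor H ((LinearMap.mulRight k b) ∘ₗ (Algebra.linearMap k A))
            ∘ₗ LinearMap.lTensor H (Coalgebra.counit (R := k)) := by
      rw [← LinearMap.lTensor_comp]; rfl
    rw [split, LinearMap.comp_assoc, Coalgebra.lTensor_counit_comp_comul]
    apply LinearMap.ext; intro y
    simp
  have main : TT k H A act a 1 1 b 1 ∘ₗ D2 k H
      = (TensorProduct.map ((LinearMap.mulLeft k a) ∘ₗ (Algebra.linearMap k A))
          ((TensorProduct.mk k H A).flip b))
        ∘ₗ (TensorProduct.mk k k H) 1 := by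
    calc TT k H A act a 1 1 b 1 ∘ₗ D2 k H
        = TensorProduct.map ((LinearMap.mulLeft k a) ∘ₗ (act.flip 1))
            (TensorProduct.map (LinearMap.id : H →ₗ[k] H)
              ((LinearMap.mulRight k b) ∘ₗ act.flip 1))
            ∘ₗ (TensorProduct.map (LinearMap.id : H →ₗ[k] H) (Coalgebra.comul (R := k))
              ∘ₗ Coalgebra.comul) := by
          rw [TT, hG]; rfl
      _ = (TensorProduct.map ((LinearMap.mulLeft k a) ∘ₗ (act.flip 1))
            (TensorProduct.map (LinearMap.id : H →ₗ[k] H)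
              ((LinearMap.mulRight k b) ∘ₗ act.flip 1))
            ∘ₗ TensorProduct.map (LinearMap.id : H →ₗ[k] H) (Coalgebra.comul (R := k)))
            ∘ₗ Coalgebra.comul := by
          rw [LinearMap.comp_assoc]
      _ = TensorProduct.map (((LinearMap.mulLeft k a) ∘ₗ (act.flip 1)) ∘ₗ LinearMap.id)
            ((TensorProduct.map (LinearMap.id : H →ₗ[k] H)
              ((LinearMap.mulRight k b) ∘ₗ act.flip 1)) ∘ₗ Coalgebra.comul)
            ∘ₗ Coalgebra.comul := by
          rw [← TensorProduct.map_comp]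
      _ = TensorProduct.map ((LinearMap.mulLeft k a) ∘ₗ (act.flip 1))
            ((TensorProduct.mk k H A).flip b) ∘ₗ Coalgebra.comul := by
          rw [hJ, LinearMap.comp_id]
      _ = TensorProduct.map (((LinearMap.mulLeft k a) ∘ₗ (Algebra.linearMap k A))
              ∘ₗ (Coalgebra.counit (R := k) (A := H)))
            (((TensorProduct.mk k H A).flip b) ∘ₗ LinearMap.id) ∘ₗ Coalgebra.comul := by
          rw [hS1, LinearMap.comp_assoc, LinearMap.comp_id]
      _ = (TensorProduct.map ((LinearMap.mulLeft k a) ∘ₗ (Algebra.linearMap k A))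
            ((TensorProduct.mk k H A).flip b)
            ∘ₗ TensorProduct.map (Coalgebra.counit (R := k) (A := H)) LinearMap.id)
            ∘ₗ Coalgebra.comul := by
          rw [← TensorProduct.map_comp]
      _ = TensorProduct.map ((LinearMap.mulLeft k a) ∘ₗ (Algebra.linearMap k A))
            ((TensorProduct.mk k H A).flip b)
            ∘ₗ (LinearMap.rTensor H (Coalgebra.counit (R := k)) ∘ₗ Coalgebra.comul) := by
          rw [LinearMap.comp_assoc]; rfl
      _ = (TensorProduct.map ((LinearMap.mulLeft k a) ∘ₗ (Algebra.linearMap k A))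
          ((TensorProduct.mk k H A).flip b))
        ∘ₗ (TensorProduct.mk k k H) 1 := by
          rw [Coalgebra.rTensor_counit_comp_comul]
  have := LinearMap.congr_fun main g
  simpa using this

end CMaux


theorem connesMoscovici_algebra (k H A : Type*) [CommRing k] [Ring H]
    [HopfAlgebra k H] [Ring A] [Algebra k A]
    -- a left H-module algebra structure on A:
    (act : H →ₗ[k] A →ₗ[k] A)
    (act_one : ∀ a : A, act 1 a = a)
    (act_mul : ∀ (g h : H) (a : A), act (g * h) a = act g (act h a))
    (act_alg_mul : ∀ (h : H) (a a' : A),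
      act h (a * a') = TensorProduct.lift
        ((LinearMap.mul k A).compl₁₂ (act.flip a) (act.flip a'))
        (Coalgebra.comul (R := k) h))
    (act_alg_one : ∀ h : H, act h (1 : A) = Coalgebra.counit (R := k) h • (1 : A))
    -- the Connes–Moscovici multiplication on B = A ⊗ H ⊗ A:
    (m : (A ⊗[k] (H ⊗[k] A)) →ₗ[k] (A ⊗[k] (H ⊗[k] A)) →ₗ[k] (A ⊗[k] (H ⊗[k] A)))
    (hm : ∀ (a₁ a₂ a₁' a₂' : A) (h h' : H),
      m (a₁ ⊗ₜ[k] (h ⊗ₜ[k] a₂)) (a₁' ⊗ₜ[k] (h' ⊗ₜ[k] a₂'))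
        = (TensorProduct.map
            ((LinearMap.mulLeft k a₁).comp (act.flip a₁'))
            (TensorProduct.map
              (LinearMap.mulRight k h')
              ((LinearMap.mulRight k a₂).comp (act.flip a₂'))))
          ((TensorProduct.map LinearMap.id (Coalgebra.comul (R := k)))
            (Coalgebra.comul (R := k) h))) :
    -- B is an associative unital k-algebra with unit 1 ⊗ 1 ⊗ 1:
    (∀ x y z : A ⊗[k] (H ⊗[k] A), m (m x y) z = m x (m y z)) ∧
    (∀ x : A ⊗[k] (H ⊗[k] A),
      m ((1 : A) ⊗ₜ[k] ((1 : H) ⊗ₜ[k] (1 : A))) x = x ∧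
      m x ((1 : A) ⊗ₜ[k] ((1 : H) ⊗ₜ[k] (1 : A))) = x) := by
  have hm' : ∀ (a₁ a₂ a₁' a₂' : A) (h h' : H),
      m (a₁ ⊗ₜ[k] (h ⊗ₜ[k] a₂)) (a₁' ⊗ₜ[k] (h' ⊗ₜ[k] a₂'))
        = CMaux.TT k H A act a₁ a₁' h' a₂ a₂' (CMaux.D2 k H h) := hm
  constructor
  · -- associativity
    refine CMaux.t3ind ?_ ?_ ?_
    · intro y z; simp
    · intro a g b
      refine CMaux.t3ind ?_ ?_ ?_
      · intro z; simp
      · intro c h d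
        refine CMaux.t3ind ?_ ?_ ?_
        · simp
        · intro e l f
          rw [hm' a b c d g h]
          have ML : ∀ w, m (CMaux.TT k H A act a c h b d w) (e ⊗ₜ[k] (l ⊗ₜ[k] f))
              = CMaux.G5 k H A act a b c d e f l
                  (CMaux.MergeB k H (CMaux.D2 k H h) (CMaux.Xi1 k H w)) := by
            refine CMaux.t3ind ?_ ?_ ?_
            · simp
            · intro p q r
              rw [CMaux.TT_tmul, hm', CMaux.D2_mul, CMaux.Xi1_tmul, CMaux.MergeB_tmul]
              generalize CMaux.D2 k H q * CMaux.D2 k H h = ω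
              refine CMaux.t3ind
                (Q := fun ω => CMaux.TT k H A act (a * act p c) e l (act r d * b) f ω
                  = CMaux.G5 k H A act a b c d e f l (p ⊗ₜ[k] (ω ⊗ₜ[k] r))) ?_ ?_ ?_ ω
              · simp
              · intro u v w
                rw [CMaux.TT_tmul, CMaux.G5_tmul, mul_assoc]
              · intro ω₁ ω₂ h₁ h₂
                simp only [map_add, add_tmul, tmul_add, h₁, h₂]
            · intro u v h₁ h₂
              simp only [map_add, LinearMap.add_apply, h₁, h₂]
          have MR : ∀ w, m (a ⊗ₜ[k] (g ⊗ₜ[k] b)) (CMaux.TT k H A act c e l d f w)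
              = CMaux.G5 k H A act a b c d e f l
                  (CMaux.MergeB k H w (CMaux.Xi2 k H (CMaux.D2 k H g))) := by
            refine CMaux.t3ind ?_ ?_ ?_
            · simp
            · intro h1 h2 h3
              rw [CMaux.TT_tmul, hm']
              generalize CMaux.D2 k H g = Γ
              refine CMaux.t3ind
                (Q := fun Γ => CMaux.TT k H A act a (c * act h1 e) (h2 * l) b (act h3 f * d) Γ
                  = CMaux.G5 k H A act a b c d e f l
                      (CMaux.MergeB k H (h1 ⊗ₜ[k] (h2 ⊗ₜ[k] h3)) (CMaux.Xi2 k H Γ))) ?_ ?_ ?_ Γ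
              · simp
              · intro p q r
                rw [CMaux.TT_tmul, CMaux.Xi2_tmul, act_alg_mul, act_alg_mul]
                generalize Coalgebra.comul (R := k) p = σ
                generalize Coalgebra.comul (R := k) r = τ
                induction σ using TensorProduct.induction_on with
                | zero => simp
                | tmul p1 p2 =>
                  induction τ using TensorProduct.induction_on with
                  | zero => simp
                  | tmul r1 r2 =>
                    simp only [TensorProduct.lift.tmul, LinearMap.compl₁₂_apply,
                      LinearMap.mul_apply', LinearMap.flip_apply,
                      TensorProduct.assoc_tmul, LinearMap.lTensor_tmul,
                      CMaux.gam_tmul, CMaux.MergeB_tmul,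
                      Algebra.TensorProduct.tmul_mul_tmul, CMaux.G5_tmul]
                    simp [act_mul, mul_assoc]
                  | add τ₁ τ₂ k₁ k₂ =>
                    simp only [map_add, add_tmul, tmul_add, mul_add, add_mul,
                      LinearMap.add_apply, k₁, k₂]
                | add σ₁ σ₂ k₁ k₂ =>
                  simp only [map_add, add_tmul, tmul_add, mul_add, add_mul,
                    LinearMap.add_apply, k₁, k₂]
              · intro Γ₁ Γ₂ h₁ h₂
                simp only [map_add, LinearMap.add_apply, h₁, h₂]
            · intro w₁ w₂ h₁ h₂
              simp only [map_add, LinearMap.add_apply, h₁, h₂]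
          rw [ML, CMaux.key, ← MR, ← hm']
        · intro z₁ z₂ h₁ h₂
          simp only [map_add, h₁, h₂]
      · intro y₁ y₂ h₁ h₂ z
        simp only [map_add, LinearMap.add_apply, h₁, h₂]
    · intro x₁ x₂ h₁ h₂ y z
      simp only [map_add, LinearMap.add_apply, h₁, h₂]
  · -- unit laws
    refine CMaux.t3ind ?_ ?_ ?_
    · constructor <;> simp
    · intro a g b
      constructor
      · rw [hm', CMaux.D2_one, CMaux.TT_tmul]
        simp [act_one]
      · rw [hm']
        exact CMaux.TT_unit k H A act act_alg_one a b g
    · intro u v h₁ h₂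
      constructor
      · simp only [map_add, h₁.1, h₂.1]
      · simp only [map_add, LinearMap.add_apply, h₁.2, h₂.2]
end

section
/- Let B be a bialgebra over a commutative ring k and A a k-algebra which is both a right B-module algebra (with action ·) and a right B-comodule algebra (with coaction ρ(a) = Σ a₀ ⊗ a₁), satisfying the Yetter–Drinfel'd compatibility Σ (a·b₍₂₎)₀ ⊗ b₍₁₎ (a·b₍₂₎)₁ = Σ a₀·b₍₁₎ ⊗ a₁ b₍₂₎ for all a ∈ A, b ∈ B, and braided commutativity Σ a'₀ (a · a'₁) = a a' for all a, a' ∈ A. In the smash product algebra A # B (with multiplication (a # b)(a' # b') = Σ a'(a·b'₍₁₎) ⊗ b b'₍₂₎ and unit 1 # 1), the map s : A → A # B, s(a) = Σ a₀ # a₁ is a k-algebra homomorphism, the map t : A → A # B, t(a) = a # 1_B is a k-algebra anti-homomorphism, and their images commute: s(a) t(a') = t(a') s(a) for all a, a' ∈ A. -/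
/-!
Statement 9: For a bialgebra `B` over `k` and a braided commutative right-right
Yetter–Drinfel'd module algebra `A`, in the smash product algebra `A # B` the
map `s : a ↦ Σ a₀ # a₁` is a `k`-algebra homomorphism, `t : a ↦ a # 1` is a
`k`-algebra anti-homomorphism, and their images commute.
(Paper: Section 3.4.7.)
-/

open TensorProduct

theorem smashProduct_source_target (k B A : Type*) [CommRing k] [Ring B]
    [Bialgebra k B] [Ring A] [Algebra k A]
    -- a right B-module algebra structure on A:
    (act : A →ₗ[k] B →ₗ[k] A)
    (act_one : ∀ a : A, act a 1 = a)
    (act_mul : ∀ (a : A) (b b' : B), act a (b * b') = act (act a b) b')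
    (act_alg_mul : ∀ (a a' : A) (b : B),
      act (a * a') b = TensorProduct.lift
        ((LinearMap.mul k A).compl₁₂ (act a) (act a'))
        (Coalgebra.comul (R := k) b))
    (act_alg_one : ∀ b : B, act (1 : A) b = Coalgebra.counit (R := k) b • (1 : A))
    -- a right B-comodule algebra structure on A, ρ a = Σ a₀ ⊗ a₁:
    (ρ : A →ₗ[k] A ⊗[k] B)
    (ρ_coassoc : ∀ a : A, (TensorProduct.assoc k A B B)
        ((TensorProduct.map ρ LinearMap.id) (ρ a))
        = (TensorProduct.map LinearMap.id (Coalgebra.comul (R := k))) (ρ a))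
    (ρ_counit : ∀ a : A,
      (TensorProduct.rid k A)
        ((TensorProduct.map LinearMap.id (Coalgebra.counit (R := k))) (ρ a)) = a)
    (ρ_mul : ∀ a a' : A, ρ (a * a') = ρ a * ρ a')
    (ρ_one : ρ 1 = 1)
    -- the Yetter–Drinfel'd compatibility condition
    -- Σ (a·b₍₂₎)₀ ⊗ b₍₁₎ (a·b₍₂₎)₁ = Σ a₀·b₍₁₎ ⊗ a₁ b₍₂₎:
    (yd : ∀ (a : A) (b : B),
      TensorProduct.lift
        ((LinearMap.mul k (A ⊗[k] B)).compl₁₂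
          ((TensorProduct.mk k A B) 1) (ρ.comp (act a)))
        (Coalgebra.comul (R := k) b)
      = TensorProduct.map₂ act (LinearMap.mul k B) (ρ a)
          (Coalgebra.comul (R := k) b))
    -- braided commutativity Σ a'₀ (a · a'₁) = a a':
    (bc : ∀ a a' : A,
      TensorProduct.lift ((LinearMap.mul k A).compl₂ (act a)) (ρ a') = a * a')
    -- the smash product multiplication on A # B = A ⊗ B:
    (m : (A ⊗[k] B) →ₗ[k] (A ⊗[k] B) →ₗ[k] (A ⊗[k] B))
    (hm : ∀ (a a' : A) (b b' : B),
      m (a ⊗ₜ[k] b) (a' ⊗ₜ[k] b')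
        = (TensorProduct.map
            ((LinearMap.mulLeft k a').comp (act a))
            (LinearMap.mulLeft k b))
          (Coalgebra.comul (R := k) b'))
    -- the source and target maps s a = Σ a₀ # a₁ and t a = a # 1:
    (s t : A → A ⊗[k] B)
    (hs : ∀ a : A, s a = ρ a)
    (ht : ∀ a : A, t a = a ⊗ₜ[k] (1 : B)) :
    -- s is a k-algebra homomorphism:
    ((∀ a a' : A, s (a + a') = s a + s a') ∧
     (∀ (c : k) (a : A), s (c • a) = c • s a) ∧
     (∀ a a' : A, m (s a) (s a') = s (a * a')) ∧
     s 1 = (1 : A) ⊗ₜ[k] (1 : B)) ∧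
    -- t is a k-algebra anti-homomorphism:
    ((∀ a a' : A, t (a + a') = t a + t a') ∧
     (∀ (c : k) (a : A), t (c • a) = c • t a) ∧
     (∀ a a' : A, m (t a) (t a') = t (a' * a)) ∧
     t 1 = (1 : A) ⊗ₜ[k] (1 : B)) ∧
    -- the images of s and t commute:
    (∀ a a' : A, m (s a) (t a') = m (t a') (s a)) := by

  have hmul2 : ∀ (x : A ⊗[k] B) (c : A) (b : B),
      m x (c ⊗ₜ[k] b) = (c ⊗ₜ[k] (1 : B)) *
        TensorProduct.map₂ act (LinearMap.mul k B) x (Coalgebra.comul (R := k) b) := by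
    intro x c b
    induction x using TensorProduct.induction_on with
    | zero => simp only [map_zero, LinearMap.zero_apply, mul_zero]
    | tmul p q =>
        rw [hm]
        generalize Coalgebra.comul (R := k) b = y
        induction y using TensorProduct.induction_on with
        | zero => simp only [map_zero, mul_zero]
        | tmul b1 b2 =>
            simp only [TensorProduct.map_tmul, LinearMap.comp_apply,
              LinearMap.mulLeft_apply, TensorProduct.map₂_apply_tmul,
              Algebra.TensorProduct.tmul_mul_tmul, LinearMap.mul_apply', one_mul]
        | add y z hy hz => simp only [map_add, hy, hz, mul_add]
    | add x y hx hy =>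
        simp only [map_add, LinearMap.add_apply, hx, hy, mul_add]
  set asm := ((TensorProduct.assoc k A B B).symm).toLinearMap with hasm
  have key_s : ∀ (a : A) (x : A ⊗[k] B),
      m (ρ a) x
        = TensorProduct.lift ((LinearMap.mul k (A ⊗[k] B)).compl₂ (ρ.comp (act a)))
            (asm ((TensorProduct.map LinearMap.id (Coalgebra.comul (R := k))) x)) := by
    intro a x
    induction x using TensorProduct.induction_on with
    | zero => simp only [map_zero]
    | tmul c b =>
        rw [hmul2, ← yd a b]
        simp only [TensorProduct.map_tmul, LinearMap.id_coe, id_eq]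
        generalize Coalgebra.comul (R := k) b = y
        induction y using TensorProduct.induction_on with
        | zero => simp only [map_zero, mul_zero, TensorProduct.tmul_zero]
        | tmul b1 b2 =>
            simp only [hasm, LinearEquiv.coe_coe, TensorProduct.assoc_symm_tmul,
              TensorProduct.lift.tmul, LinearMap.compl₁₂_apply,
              LinearMap.compl₂_apply, TensorProduct.mk_apply,
              LinearMap.mul_apply', LinearMap.comp_apply,
              ← mul_assoc, Algebra.TensorProduct.tmul_mul_tmul, mul_one, one_mul]
        | add y z hy hz =>
            simp only [map_add, mul_add, TensorProduct.tmul_add, hy, hz]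
    | add x y hx hy => simp only [map_add, hx, hy]
  have coassoc' : ∀ a : A,
      asm ((TensorProduct.map LinearMap.id (Coalgebra.comul (R := k))) (ρ a))
      = (TensorProduct.map ρ LinearMap.id) (ρ a) := by
    intro a
    rw [hasm, ← ρ_coassoc a]
    exact (TensorProduct.assoc k A B B).symm_apply_apply _
  have step3 : ∀ (a : A) (x : A ⊗[k] B),
      TensorProduct.lift ((LinearMap.mul k (A ⊗[k] B)).compl₂ (ρ.comp (act a)))
        ((TensorProduct.map ρ LinearMap.id) x)
      = ρ (TensorProduct.lift ((LinearMap.mul k A).compl₂ (act a)) x) := by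
    intro a x
    induction x using TensorProduct.induction_on with
    | zero => simp only [map_zero]
    | tmul c b =>
        simp only [TensorProduct.map_tmul, LinearMap.id_coe, id_eq,
          TensorProduct.lift.tmul, LinearMap.compl₂_apply, LinearMap.mul_apply',
          LinearMap.comp_apply, ρ_mul]
    | add x y hx hy => simp only [map_add, hx, hy]
  have tmul_right : ∀ (x : A ⊗[k] B) (c : A),
      m x (c ⊗ₜ[k] (1 : B))
        = (TensorProduct.map (LinearMap.mulLeft k c) LinearMap.id) x := by
    intro x c
    induction x using TensorProduct.induction_on with
    | zero => simp only [map_zero, LinearMap.zero_apply]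
    | tmul p q =>
        rw [hm, Bialgebra.comul_one, Algebra.TensorProduct.one_def]
        simp only [TensorProduct.map_tmul, LinearMap.comp_apply,
          LinearMap.mulLeft_apply, act_one, mul_one, LinearMap.id_coe, id_eq]
    | add x y hx hy => simp only [map_add, LinearMap.add_apply, hx, hy]
  have key_t : ∀ (a' : A) (x : A ⊗[k] B),
      m (a' ⊗ₜ[k] (1 : B)) x
        = (TensorProduct.map
            (TensorProduct.lift ((LinearMap.mul k A).compl₂ (act a'))) LinearMap.id)
            (asm ((TensorProduct.map LinearMap.id (Coalgebra.comul (R := k))) x)) := by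
    intro a' x
    induction x using TensorProduct.induction_on with
    | zero => simp only [map_zero]
    | tmul c b =>
        rw [hm]
        simp only [TensorProduct.map_tmul, LinearMap.id_coe, id_eq]
        generalize Coalgebra.comul (R := k) b = y
        induction y using TensorProduct.induction_on with
        | zero => simp only [map_zero, TensorProduct.tmul_zero]
        | tmul b1 b2 =>
            simp only [hasm, LinearEquiv.coe_coe, TensorProduct.assoc_symm_tmul,
              TensorProduct.map_tmul, LinearMap.comp_apply,
              LinearMap.mulLeft_apply, one_mul, TensorProduct.lift.tmul,
              LinearMap.compl₂_apply, LinearMap.mul_apply',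
              LinearMap.id_coe, id_eq]
        | add y z hy hz => simp only [map_add, TensorProduct.tmul_add, hy, hz]
    | add x y hx hy => simp only [map_add, hx, hy]
  have step4 : ∀ (a' : A) (x : A ⊗[k] B),
      (TensorProduct.map
          (TensorProduct.lift ((LinearMap.mul k A).compl₂ (act a'))) LinearMap.id)
        ((TensorProduct.map ρ LinearMap.id) x)
      = (TensorProduct.map (LinearMap.mulLeft k a') LinearMap.id) x := by
    intro a' x
    induction x using TensorProduct.induction_on with
    | zero => simp only [map_zero]
    | tmul c b =>
        simp only [TensorProduct.map_tmul, LinearMap.id_coe, id_eq,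
          LinearMap.mulLeft_apply, bc a' c]
    | add x y hx hy => simp only [map_add, hx, hy]
  refine ⟨⟨?_, ?_, ?_, ?_⟩, ⟨?_, ?_, ?_, ?_⟩, ?_⟩
  · intro a a'; rw [hs, hs, hs, map_add]
  · intro c a; rw [hs, hs, map_smul]
  · intro a a'; rw [hs, hs, hs, key_s, coassoc', step3, bc]
  · rw [hs, ρ_one, Algebra.TensorProduct.one_def]
  · intro a a'; rw [ht, ht, ht, add_tmul]
  · intro c a; rw [ht, ht, TensorProduct.smul_tmul']
  · intro a a'
    rw [ht, ht, ht, hm, Bialgebra.comul_one, Algebra.TensorProduct.one_def]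
    simp only [TensorProduct.map_tmul, LinearMap.comp_apply, act_one,
      LinearMap.mulLeft_apply, mul_one]
  · rw [ht]
  · intro a a'
    rw [hs, ht, tmul_right, key_t, coassoc', step4]
end

section
/- Let B be a bialgebra over a commutative ring k, and let J be an invertible element of the tensor product algebra B ⊗_k B which is a normalised 2-cocycle: (J ⊗ 1)·((Δ⊗id)(J)) = (1 ⊗ J)·((id⊗Δ)(J)) in B ⊗ B ⊗ B, and (ε⊗id)(J) = 1_B = (id⊗ε)(J). Then B with its original multiplication, the twisted coproduct Δ_J(b) := J · Δ(b) · J⁻¹ and the original counit ε is again a bialgebra over k: Δ_J is coassociative, ε is a counit for Δ_J, and Δ_J and ε are k-algebra homomorphisms. -/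
/-!
Twisting is conjugation by the unit `F`, so `Δ_F = F Δ(·) F⁻¹` is again an algebra map. Both
iterated twisted coproducts are iterated coproducts conjugated by a unit, `(F ⊗ 1)(Δ ⊗ id)(F)`
and `(1 ⊗ F)(id ⊗ Δ)(F)` respectively; the cocycle condition says that the associator carries
the first unit to the second, so coassociativity of `Δ` transfers to `Δ_F`. Normalisation says
that the counit legs of `F` are `1`, so they cancel when a counit leg is applied to `Δ_F`.
-/

open TensorProduct

theorem map_units_conj_of_map_eq {M N G : Type*} [Monoid M] [Monoid N] [FunLike G M N]
    [MonoidHomClass G M N] (φ : G) {u : Mˣ} {v : Nˣ} (h : φ u = v) (x : M) :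
    φ (u * x * ↑u⁻¹) = v * φ x * ↑v⁻¹ := by
  have hv : Units.map (φ : M →* N) u = v := Units.ext h
  rw [map_mul, map_mul, h, ← hv]
  rfl

namespace Algebra.TensorProduct

variable {R A C D : Type*} [CommSemiring R] [Semiring A] [Semiring C] [Semiring D]
  [Algebra R A] [Algebra R C] [Algebra R D]

theorem map_id_apply_of_forall_eq_mul_mul {f g : A →ₐ[R] C} {x y : C}
    (h : ∀ a, f a = x * g a * y) (z : A ⊗[R] D) :
    map f (AlgHom.id R D) z = (x ⊗ₜ 1) * map g (AlgHom.id R D) z * (y ⊗ₜ 1) := by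
  induction z using TensorProduct.induction_on with
  | zero => simp
  | tmul a d => simp [h]
  | add z z' hz hz' => simp only [map_add, hz, hz', mul_add, add_mul]

theorem id_map_apply_of_forall_eq_mul_mul {f g : A →ₐ[R] C} {x y : C}
    (h : ∀ a, f a = x * g a * y) (z : D ⊗[R] A) :
    map (AlgHom.id R D) f z = (1 ⊗ₜ x) * map (AlgHom.id R D) g z * (1 ⊗ₜ y) := by
  induction z using TensorProduct.induction_on with
  | zero => simp
  | tmul d a => simp [h]
  | add z z' hz hz' => simp only [map_add, hz, hz', mul_add, add_mul]

end Algebra.TensorProduct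

section Twist

variable {R A : Type*} [CommSemiring R] [Semiring A] [Bialgebra R A]

open Algebra.TensorProduct (includeLeft includeRight)
open Bialgebra (comulAlgHom counitAlgHom)

noncomputable def twistComul (F : (A ⊗[R] A)ˣ) : A →ₐ[R] A ⊗[R] A :=
  (MulSemiringAction.toAlgHom R (A ⊗[R] A) (ConjAct.toConjAct F)).comp (comulAlgHom R A)

variable (F : (A ⊗[R] A)ˣ)

theorem twistComul_apply (a : A) :
    twistComul F a = F * Coalgebra.comul (R := R) a * ↑F⁻¹ := rfl

theorem map_twistComul_of_map_eq_one {N G : Type*} [Monoid N] [FunLike G (A ⊗[R] A) N]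
    [MonoidHomClass G (A ⊗[R] A) N] {φ : G} (hF : φ F = 1) (a : A) :
    φ (twistComul F a) = φ (Coalgebra.comul (R := R) a) := by
  rw [twistComul_apply, map_units_conj_of_map_eq φ (v := 1) hF]
  simp

noncomputable def twistLeft : ((A ⊗[R] A) ⊗[R] A)ˣ :=
  Units.map (includeLeft : A ⊗[R] A →ₐ[R] _).toMonoidHom F *
    Units.map (Algebra.TensorProduct.map (comulAlgHom R A) (AlgHom.id R A)).toMonoidHom F

noncomputable def twistRight : (A ⊗[R] (A ⊗[R] A))ˣ :=
  Units.map (includeRight : A ⊗[R] A →ₐ[R] _).toMonoidHom F *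
    Units.map (Algebra.TensorProduct.map (AlgHom.id R A) (comulAlgHom R A)).toMonoidHom F

theorem map_twistComul_id_twistComul (a : A) :
    Algebra.TensorProduct.map (twistComul F) (AlgHom.id R A) (twistComul F a) =
      twistLeft F * Algebra.TensorProduct.map (comulAlgHom R A) (AlgHom.id R A)
        (Coalgebra.comul a) * ↑(twistLeft F)⁻¹ := by
  rw [Algebra.TensorProduct.map_id_apply_of_forall_eq_mul_mul (g := comulAlgHom R A)
    (twistComul_apply F), twistComul_apply]
  simp [twistLeft, mul_assoc]

theorem map_id_twistComul_twistComul (a : A) :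
    Algebra.TensorProduct.map (AlgHom.id R A) (twistComul F) (twistComul F a) =
      twistRight F * Algebra.TensorProduct.map (AlgHom.id R A) (comulAlgHom R A)
        (Coalgebra.comul a) * ↑(twistRight F)⁻¹ := by
  rw [Algebra.TensorProduct.id_map_apply_of_forall_eq_mul_mul (g := comulAlgHom R A)
    (twistComul_apply F), twistComul_apply]
  simp [twistRight, mul_assoc]

theorem twistComul_coassoc
    (hF : ((F : A ⊗[R] A) ⊗ₜ[R] (1 : A)) *
        TensorProduct.map (Coalgebra.comul (R := R)) LinearMap.id ↑F
      = (TensorProduct.assoc R A A A).symm ((1 : A) ⊗ₜ[R] (F : A ⊗[R] A))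
        * (TensorProduct.assoc R A A A).symm
            (TensorProduct.map LinearMap.id (Coalgebra.comul (R := R)) ↑F)) (a : A) :
    Algebra.TensorProduct.assoc R R R A A A
        (Algebra.TensorProduct.map (twistComul F) (AlgHom.id R A) (twistComul F a)) =
      Algebra.TensorProduct.map (AlgHom.id R A) (twistComul F) (twistComul F a) := by
  set assoc := Algebra.TensorProduct.assoc R R R A A A
  have h_twistLeft : assoc (twistLeft F) = twistRight F := by
    rw [← assoc.apply_symm_apply (twistRight F)]
    congr 1
    simp only [twistRight, Units.val_mul, map_mul]
    exact hF
  rw [map_twistComul_id_twistComul, map_id_twistComul_twistComul,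
    map_units_conj_of_map_eq assoc h_twistLeft]
  congr 2
  exact Coalgebra.coassoc_apply a

theorem lid_map_counit_id_twistComul
    (hF : TensorProduct.lid R A (TensorProduct.map (Coalgebra.counit (R := R)) LinearMap.id
      (F : A ⊗[R] A)) = 1) (a : A) :
    TensorProduct.lid R A (TensorProduct.map (Coalgebra.counit (R := R)) LinearMap.id
      (twistComul F a)) = a := by
  let φ : A ⊗[R] A →ₐ[R] A := (Algebra.TensorProduct.lid R A).toAlgHom.comp
    (Algebra.TensorProduct.map (counitAlgHom R A) (AlgHom.id R A))
  refine (map_twistComul_of_map_eq_one F (φ := φ) hF a).trans ?_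
  show TensorProduct.lid R A (Coalgebra.counit.rTensor A (Coalgebra.comul a)) = a
  rw [Coalgebra.rTensor_counit_comul]
  simp

theorem rid_map_id_counit_twistComul
    (hF : TensorProduct.rid R A (TensorProduct.map LinearMap.id (Coalgebra.counit (R := R))
      (F : A ⊗[R] A)) = 1) (a : A) :
    TensorProduct.rid R A (TensorProduct.map LinearMap.id (Coalgebra.counit (R := R))
      (twistComul F a)) = a := by
  let φ : A ⊗[R] A →ₐ[R] A := (Algebra.TensorProduct.rid R R A).toAlgHom.comp
    (Algebra.TensorProduct.map (AlgHom.id R A) (counitAlgHom R A))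
  refine (map_twistComul_of_map_eq_one F (φ := φ) hF a).trans ?_
  show TensorProduct.rid R A (Coalgebra.counit.lTensor A (Coalgebra.comul a)) = a
  rw [Coalgebra.lTensor_counit_comul]
  simp

end Twist

theorem drinfeld_twist_bialgebra (k B : Type*) [CommRing k] [Ring B]
    [Bialgebra k B]
    (J Jinv : B ⊗[k] B)
    (hJ : J * Jinv = 1) (hJ' : Jinv * J = 1)
    -- cocycle condition (J ⊗ 1)((Δ⊗id)(J)) = (1 ⊗ J)((id⊗Δ)(J)) in B ⊗ B ⊗ B:
    (cocycle :
      (J ⊗ₜ[k] (1 : B)) * ((TensorProduct.map (Coalgebra.comul (R := k)) LinearMap.id) J)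
        = ((TensorProduct.assoc k B B B).symm ((1 : B) ⊗ₜ[k] J))
          * ((TensorProduct.assoc k B B B).symm
              ((TensorProduct.map LinearMap.id (Coalgebra.comul (R := k))) J)))
    -- normalisation (ε⊗id)(J) = 1 = (id⊗ε)(J):
    (norm₁ : (TensorProduct.lid k B)
        ((TensorProduct.map (Coalgebra.counit (R := k)) LinearMap.id) J) = 1)
    (norm₂ : (TensorProduct.rid k B)
        ((TensorProduct.map LinearMap.id (Coalgebra.counit (R := k))) J) = 1)
    -- the twisted coproduct Δ_J b = J * Δ b * J⁻¹:
    (ΔJ : B →ₗ[k] B ⊗[k] B)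
    (hΔJ : ∀ b : B, ΔJ b = J * Coalgebra.comul (R := k) b * Jinv) :
    -- Δ_J is coassociative:
    (∀ b : B, (TensorProduct.assoc k B B B)
        ((TensorProduct.map ΔJ LinearMap.id) (ΔJ b))
      = (TensorProduct.map LinearMap.id ΔJ) (ΔJ b)) ∧
    -- ε is a counit for Δ_J:
    (∀ b : B, (TensorProduct.lid k B)
        ((TensorProduct.map (Coalgebra.counit (R := k)) LinearMap.id) (ΔJ b)) = b) ∧
    (∀ b : B, (TensorProduct.rid k B)
        ((TensorProduct.map LinearMap.id (Coalgebra.counit (R := k))) (ΔJ b)) = b) ∧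
    -- Δ_J is a k-algebra homomorphism:
    (∀ x y : B, ΔJ (x * y) = ΔJ x * ΔJ y) ∧ (ΔJ 1 = 1) ∧
    -- ε is a k-algebra homomorphism:
    (∀ x y : B, Coalgebra.counit (R := k) (x * y)
      = Coalgebra.counit (R := k) x * Coalgebra.counit (R := k) y) ∧
    (Coalgebra.counit (R := k) (1 : B) = 1) := by
  let F : (B ⊗[k] B)ˣ := ⟨J, Jinv, hJ, hJ'⟩
  obtain rfl : ΔJ = (twistComul F).toLinearMap := LinearMap.ext hΔJ
  exact ⟨twistComul_coassoc F cocycle, lid_map_counit_id_twistComul F norm₁,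
    rid_map_id_counit_twistComul F norm₂, map_mul (twistComul F), map_one (twistComul F),
    Bialgebra.counit_mul, Bialgebra.counit_one⟩
end

section
/- Let H be a Hopf algebra over a commutative ring k with coproduct Δ, counit ε and antipode S, and let i ∈ H be a normalised left integral: h i = ε(h) i for all h ∈ H and ε(i) = 1. Then the element e := Σ i₍₁₎ ⊗ S(i₍₂₎) ∈ H ⊗_k H satisfies: (a) Σ i₍₁₎ S(i₍₂₎) = 1_H; and (b) (h ⊗ 1)·e = e·(1 ⊗ h) in the tensor product algebra H ⊗_k H for all h ∈ H, i.e. Σ h i₍₁₎ ⊗ S(i₍₂₎) = Σ i₍₁₎ ⊗ S(i₍₂₎) h. Consequently the map h ↦ Σ h i₍₁₎ ⊗ S(i₍₂₎) is an H-bimodule section of the multiplication map H ⊗_k H → H, so H is a separable k-algebra. -/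
/-!
Statement 16: If `i` is a normalised left integral in a Hopf algebra `H` over
`k`, then `e = Σ i₍₁₎ ⊗ S(i₍₂₎)` is a separability idempotent:
`Σ i₍₁₎ S(i₍₂₎) = 1` and `(h ⊗ 1) e = e (1 ⊗ h)` for all `h`.  Consequently
`h ↦ (h ⊗ 1) e` is an `H`-bimodule section of the multiplication map, so `H`
is a separable `k`-algebra.  (Paper: Theorem 4.9, (x) ⇒ (i), with `L = R = k`.)
-/

open TensorProduct

noncomputable section AuxInt

variable {k H : Type*} [CommRing k] [Ring H] [HopfAlgebra k H]

/-- `γ(x ⊗ y) = Σ x₁ ⊗ S(x₂) y`. -/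
private def gamS : H ⊗[k] H →ₗ[k] H ⊗[k] H :=
  LinearMap.lTensor H
      (LinearMap.mul' k H ∘ₗ LinearMap.rTensor H (HopfAlgebra.antipode (R := k))) ∘ₗ
    (TensorProduct.assoc k H H H).toLinearMap ∘ₗ
      LinearMap.rTensor H (Coalgebra.comul (R := k))

/-- `γ'(x ⊗ y) = Σ x₁ ⊗ x₂ y`. -/
private def gamP : H ⊗[k] H →ₗ[k] H ⊗[k] H :=
  LinearMap.lTensor H (LinearMap.mul' k H) ∘ₗ
    (TensorProduct.assoc k H H H).toLinearMap ∘ₗ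
      LinearMap.rTensor H (Coalgebra.comul (R := k))

private lemma gamS_tmul (x y : H) :
    gamS (x ⊗ₜ[k] y)
      = (TensorProduct.map LinearMap.id (HopfAlgebra.antipode (R := k))
          (Coalgebra.comul (R := k) x)) * ((1 : H) ⊗ₜ[k] y) := by
  show (LinearMap.lTensor H
      (LinearMap.mul' k H ∘ₗ LinearMap.rTensor H (HopfAlgebra.antipode (R := k))))
      ((TensorProduct.assoc k H H H).toLinearMap ((Coalgebra.comul (R := k) x) ⊗ₜ[k] y)) = _
  generalize (Coalgebra.comul (R := k) x) = c
  induction c using TensorProduct.induction_on with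
  | zero => simp only [TensorProduct.zero_tmul, map_zero, zero_mul]
  | tmul p q =>
      simp only [LinearEquiv.coe_coe, TensorProduct.assoc_tmul, LinearMap.lTensor_tmul,
        LinearMap.coe_comp, Function.comp_apply, LinearMap.rTensor_tmul, LinearMap.mul'_apply,
        TensorProduct.map_tmul, LinearMap.id_coe, id_eq,
        Algebra.TensorProduct.tmul_mul_tmul, one_mul, mul_one]
  | add u v hu hv =>
      simp only [TensorProduct.add_tmul, map_add, add_mul, hu, hv]

private lemma gamP_tmul (x y : H) :
    gamP (x ⊗ₜ[k] y) = (Coalgebra.comul (R := k) x) * ((1 : H) ⊗ₜ[k] y) := by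
  show (LinearMap.lTensor H (LinearMap.mul' k H))
      ((TensorProduct.assoc k H H H).toLinearMap ((Coalgebra.comul (R := k) x) ⊗ₜ[k] y)) = _
  generalize (Coalgebra.comul (R := k) x) = c
  induction c using TensorProduct.induction_on with
  | zero => simp only [TensorProduct.zero_tmul, map_zero, zero_mul]
  | tmul p q =>
      simp only [LinearEquiv.coe_coe, TensorProduct.assoc_tmul, LinearMap.lTensor_tmul,
        LinearMap.coe_comp, Function.comp_apply, LinearMap.rTensor_tmul, LinearMap.mul'_apply,
        TensorProduct.map_tmul, LinearMap.id_coe, id_eq,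
        Algebra.TensorProduct.tmul_mul_tmul, one_mul, mul_one]
  | add u v hu hv => simp only [TensorProduct.add_tmul, map_add, add_mul, hu, hv]

private lemma gamS_mul_right (v : H ⊗[k] H) (y : H) :
    gamS (v * ((1 : H) ⊗ₜ[k] y)) = gamS v * ((1 : H) ⊗ₜ[k] y) := by
  induction v using TensorProduct.induction_on with
  | zero => simp
  | tmul a b =>
      rw [Algebra.TensorProduct.tmul_mul_tmul, mul_one, gamS_tmul, gamS_tmul,
        mul_assoc, Algebra.TensorProduct.tmul_mul_tmul, one_mul]
  | add u v hu hv => simp only [add_mul, map_add, hu, hv]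

private lemma gamP_mul_right (v : H ⊗[k] H) (y : H) :
    gamP (v * ((1 : H) ⊗ₜ[k] y)) = gamP v * ((1 : H) ⊗ₜ[k] y) := by
  induction v using TensorProduct.induction_on with
  | zero => simp
  | tmul a b =>
      rw [Algebra.TensorProduct.tmul_mul_tmul, mul_one, gamP_tmul, gamP_tmul,
        mul_assoc, Algebra.TensorProduct.tmul_mul_tmul, one_mul]
  | add u v hu hv => simp only [add_mul, map_add, hu, hv]

private lemma gamP_mul_left (h : H) (v : H ⊗[k] H) :
    gamP ((h ⊗ₜ[k] (1 : H)) * v) = (Coalgebra.comul (R := k) h) * gamP v := by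
  induction v using TensorProduct.induction_on with
  | zero => simp
  | tmul a b =>
      rw [Algebra.TensorProduct.tmul_mul_tmul, one_mul, gamP_tmul, gamP_tmul,
        Bialgebra.comul_mul, mul_assoc]
  | add u v hu hv => simp only [mul_add, map_add, hu, hv]

private lemma gamS_comul (x : H) :
    gamS (Coalgebra.comul (R := k) x) = x ⊗ₜ[k] (1 : H) := by
  show (LinearMap.lTensor H
      (LinearMap.mul' k H ∘ₗ LinearMap.rTensor H (HopfAlgebra.antipode (R := k))))
      ((TensorProduct.assoc k H H H).toLinearMap
        (LinearMap.rTensor H (Coalgebra.comul (R := k)) (Coalgebra.comul (R := k) x))) = _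
  have : (TensorProduct.assoc k H H H).toLinearMap
        (LinearMap.rTensor H (Coalgebra.comul (R := k)) (Coalgebra.comul (R := k) x))
      = LinearMap.lTensor H (Coalgebra.comul (R := k)) (Coalgebra.comul (R := k) x) :=
    Coalgebra.coassoc_apply x
  rw [this, ← LinearMap.lTensor_comp_apply, LinearMap.comp_assoc,
    HopfAlgebra.mul_antipode_rTensor_comul, LinearMap.lTensor_comp_apply,
    Coalgebra.lTensor_counit_comul, LinearMap.lTensor_tmul]
  simp

private lemma gamP_mapS_comul (x : H) :
    gamP ((TensorProduct.map LinearMap.id (HopfAlgebra.antipode (R := k)))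
      (Coalgebra.comul (R := k) x)) = x ⊗ₜ[k] (1 : H) := by
  have key : ∀ c : H ⊗[k] H,
      gamP ((TensorProduct.map LinearMap.id (HopfAlgebra.antipode (R := k))) c)
        = (LinearMap.lTensor H
            (LinearMap.mul' k H ∘ₗ LinearMap.lTensor H (HopfAlgebra.antipode (R := k))))
            ((TensorProduct.assoc k H H H).toLinearMap
              (LinearMap.rTensor H (Coalgebra.comul (R := k)) c)) := by
    intro c
    induction c using TensorProduct.induction_on with
    | zero => simp
    | tmul p q =>
        simp only [TensorProduct.map_tmul, LinearMap.rTensor_tmul, LinearMap.id_coe, id_eq]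
        rw [gamP_tmul]
        generalize (Coalgebra.comul (R := k) p) = c
        induction c using TensorProduct.induction_on with
        | zero => simp only [TensorProduct.zero_tmul, map_zero, zero_mul]
        | tmul a b =>
            simp only [LinearEquiv.coe_coe, TensorProduct.assoc_tmul, LinearMap.lTensor_tmul,
              LinearMap.coe_comp, Function.comp_apply, LinearMap.mul'_apply,
              Algebra.TensorProduct.tmul_mul_tmul, one_mul, mul_one]
        | add u v hu hv =>
            simp only [TensorProduct.add_tmul, map_add, add_mul, hu, hv]
    | add u v hu hv => simp only [map_add, hu, hv]
  rw [key]
  have : (TensorProduct.assoc k H H H).toLinearMap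
        (LinearMap.rTensor H (Coalgebra.comul (R := k)) (Coalgebra.comul (R := k) x))
      = LinearMap.lTensor H (Coalgebra.comul (R := k)) (Coalgebra.comul (R := k) x) :=
    Coalgebra.coassoc_apply x
  rw [this, ← LinearMap.lTensor_comp_apply, LinearMap.comp_assoc,
    HopfAlgebra.mul_antipode_lTensor_comul, LinearMap.lTensor_comp_apply,
    Coalgebra.lTensor_counit_comul, LinearMap.lTensor_tmul]
  simp

private lemma gamP_gamS (v : H ⊗[k] H) : gamP (gamS v) = v := by
  induction v using TensorProduct.induction_on with
  | zero => simp
  | tmul x y =>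
      rw [gamS_tmul, gamP_mul_right, gamP_mapS_comul,
        Algebra.TensorProduct.tmul_mul_tmul, mul_one, one_mul]
  | add u v hu hv => simp only [map_add, hu, hv]

private lemma gamS_gamP (v : H ⊗[k] H) : gamS (gamP v) = v := by
  induction v using TensorProduct.induction_on with
  | zero => simp
  | tmul x y =>
      rw [gamP_tmul, gamS_mul_right, gamS_comul,
        Algebra.TensorProduct.tmul_mul_tmul, mul_one, one_mul]
  | add u v hu hv => simp only [map_add, hu, hv]

private lemma gamS_comul_mul (h : H) (u : H ⊗[k] H) :
    gamS ((Coalgebra.comul (R := k) h) * u) = (h ⊗ₜ[k] (1 : H)) * gamS u := by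
  conv_lhs => rw [← gamP_gamS u, ← gamP_mul_left, gamS_gamP]

end AuxInt

private lemma mul'_tmul_one_mul {k H : Type*} [CommRing k] [Ring H] [HopfAlgebra k H]
    (h : H) (u : H ⊗[k] H) :
    LinearMap.mul' k H ((h ⊗ₜ[k] (1 : H)) * u) = h * LinearMap.mul' k H u := by
  induction u using TensorProduct.induction_on with
  | zero => simp
  | tmul a b =>
      simp [Algebra.TensorProduct.tmul_mul_tmul, LinearMap.mul'_apply, one_mul, mul_assoc]
  | add u v hu hv => simp only [mul_add, map_add, hu, hv]


theorem normalized_integral_separable (k H : Type*) [CommRing k] [Ring H]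
    [HopfAlgebra k H]
    (i : H)
    -- i is a left integral:
    (hint : ∀ h : H, h * i = Coalgebra.counit (R := k) h • i)
    -- i is normalised:
    (hnorm : Coalgebra.counit (R := k) i = 1) :
    -- (a) Σ i₍₁₎ S(i₍₂₎) = 1:
    (LinearMap.mul' k H
        ((TensorProduct.map LinearMap.id (HopfAlgebra.antipode (R := k)))
          (Coalgebra.comul (R := k) i)) = 1) ∧
    -- (b) (h ⊗ 1) e = e (1 ⊗ h) for all h:
    (∀ h : H,
      (h ⊗ₜ[k] (1 : H)) *
          ((TensorProduct.map LinearMap.id (HopfAlgebra.antipode (R := k)))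
            (Coalgebra.comul (R := k) i))
        = ((TensorProduct.map LinearMap.id (HopfAlgebra.antipode (R := k)))
            (Coalgebra.comul (R := k) i)) * ((1 : H) ⊗ₜ[k] h)) ∧
    -- (c) h ↦ (h ⊗ 1) e is a section of the multiplication map:
    (∀ h : H,
      LinearMap.mul' k H
        ((h ⊗ₜ[k] (1 : H)) *
          ((TensorProduct.map LinearMap.id (HopfAlgebra.antipode (R := k)))
            (Coalgebra.comul (R := k) i))) = h) ∧
    -- (d) and it is an H-bimodule map, so H is a separable k-algebra:
    (∀ a h b : H,
      ((a * h * b) ⊗ₜ[k] (1 : H)) *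
          ((TensorProduct.map LinearMap.id (HopfAlgebra.antipode (R := k)))
            (Coalgebra.comul (R := k) i))
        = ((a ⊗ₜ[k] (1 : H)) *
            ((h ⊗ₜ[k] (1 : H)) *
              ((TensorProduct.map LinearMap.id (HopfAlgebra.antipode (R := k)))
                (Coalgebra.comul (R := k) i)))) * ((1 : H) ⊗ₜ[k] b)) := by
  set E := (TensorProduct.map LinearMap.id (HopfAlgebra.antipode (R := k)))
      (Coalgebra.comul (R := k) i) with hEdef
  have hE : gamS (i ⊗ₜ[k] (1 : H)) = E := by
    rw [gamS_tmul, ← Algebra.TensorProduct.one_def, mul_one]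
  have hcomul_i : ∀ h : H,
      Coalgebra.comul (R := k) h * (i ⊗ₜ[k] (1 : H)) = i ⊗ₜ[k] h := by
    intro h
    set r := Coalgebra.Repr.arbitrary k h with hr
    have hsum : ∑ s ∈ r.index, Coalgebra.counit (R := k) (r.left s) • r.right s = h := by
      have h1 := Coalgebra.sum_counit_tmul_eq (R := k) r
      have h2 := congrArg (TensorProduct.lid k H) h1
      rw [map_sum] at h2
      simp only [TensorProduct.lid_tmul, one_smul] at h2
      exact h2
    rw [← r.eq, Finset.sum_mul]
    have hterm : ∀ s ∈ r.index,
        (r.left s ⊗ₜ[k] r.right s) * (i ⊗ₜ[k] (1 : H))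
          = i ⊗ₜ[k] (Coalgebra.counit (R := k) (r.left s) • r.right s) := by
      intro s _
      rw [Algebra.TensorProduct.tmul_mul_tmul, mul_one, hint, TensorProduct.smul_tmul]
    rw [Finset.sum_congr rfl hterm, ← TensorProduct.tmul_sum, hsum]
  have ha : LinearMap.mul' k H E = 1 := by
    have hrfl : E = (HopfAlgebra.antipode (R := k)).lTensor H (Coalgebra.comul (R := k) i) := rfl
    rw [hrfl, HopfAlgebra.mul_antipode_lTensor_comul_apply, hnorm, map_one]
  have hb : ∀ h : H, (h ⊗ₜ[k] (1 : H)) * E = E * ((1 : H) ⊗ₜ[k] h) := by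
    intro h
    have h2 : (i ⊗ₜ[k] h : H ⊗[k] H) = (i ⊗ₜ[k] (1 : H)) * ((1 : H) ⊗ₜ[k] h) := by
      rw [Algebra.TensorProduct.tmul_mul_tmul, mul_one, one_mul]
    rw [← hE, ← gamS_comul_mul, hcomul_i h, h2, gamS_mul_right, hE]
  refine ⟨ha, hb, ?_, ?_⟩
  · intro h
    rw [mul'_tmul_one_mul, ha, mul_one]
  · intro a h b
    have h1 : ((a * h * b) ⊗ₜ[k] (1 : H))
        = (a ⊗ₜ[k] (1 : H)) * (h ⊗ₜ[k] (1 : H)) * (b ⊗ₜ[k] (1 : H)) := by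
      simp [Algebra.TensorProduct.tmul_mul_tmul]
    rw [h1, mul_assoc ((a ⊗ₜ[k] (1 : H)) * (h ⊗ₜ[k] (1 : H))) (b ⊗ₜ[k] (1 : H)) E,
      hb b, ← mul_assoc ((a ⊗ₜ[k] (1 : H)) * (h ⊗ₜ[k] (1 : H))) E ((1 : H) ⊗ₜ[k] b),
      mul_assoc (a ⊗ₜ[k] (1 : H)) (h ⊗ₜ[k] (1 : H)) E]
end
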